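/- arXiv:1506.03743 — 3 statements merged into one kernel-verified Lean document; each statement's English description precedes it below -/
import Mathlib

section
/- Let φ : U → ℝ³ be as in the setup (smooth immersion with positively oriented unit normal N, coordinates z = x+iy conformal for the positive definite second fundamental form, positive extrinsic curvature K). Then on all of U one has φₓ = (1/√K) · (N × Nᵧ) and φᵧ = −(1/√K) · (N × Nₓ), where × is the standard cross product of ℝ³. (Equivalently, in complex notation, φ_z = (i/√K) N × N_z.) -/
noncomputable section

open scoped Matrix

/-- Partial derivative in the `x` direction. -/
def pdx {E : Type*} [NormedAddCommGroup E] [NormedSpace ℝ E] (f : ℝ × ℝ → E) (p : ℝ × ℝ) : E :=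
  fderiv ℝ f p (1, 0)

/-- Partial derivative in the `y` direction. -/
def pdy {E : Type*} [NormedAddCommGroup E] [NormedSpace ℝ E] (f : ℝ × ℝ → E) (p : ℝ × ℝ) : E :=
  fderiv ℝ f p (0, 1)

/-- Standard inner product on ℝ³. -/
def dot3 (a b : Fin 3 → ℝ) : ℝ := ∑ i, a i * b i

/-! ### Algebraic lemmas about `dot3` and the cross product -/

lemma dot3_comm (a b : Fin 3 → ℝ) : dot3 a b = dot3 b a := by
  simp [dot3, mul_comm]

lemma dot3_add_right (a b c : Fin 3 → ℝ) : dot3 a (b + c) = dot3 a b + dot3 a c := by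
  simp [dot3, mul_add, Finset.sum_add_distrib]

lemma dot3_smul_right (a : Fin 3 → ℝ) (r : ℝ) (b : Fin 3 → ℝ) :
    dot3 a (r • b) = r * dot3 a b := by
  simp only [dot3, Pi.smul_apply, smul_eq_mul, Finset.mul_sum]
  exact Finset.sum_congr rfl fun i _ => by ring

lemma dot3_sub_right (a b c : Fin 3 → ℝ) : dot3 a (b - c) = dot3 a b - dot3 a c := by
  simp [dot3, mul_sub, Finset.sum_sub_distrib]

lemma dot3_add_left (a b c : Fin 3 → ℝ) : dot3 (a + b) c = dot3 a c + dot3 b c := by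
  rw [dot3_comm, dot3_add_right, dot3_comm a c, dot3_comm b c]

lemma dot3_smul_left (r : ℝ) (a b : Fin 3 → ℝ) : dot3 (r • a) b = r * dot3 a b := by
  rw [dot3_comm, dot3_smul_right, dot3_comm]

lemma dot3_sub_left (a b c : Fin 3 → ℝ) : dot3 (a - b) c = dot3 a c - dot3 b c := by
  rw [dot3_comm, dot3_sub_right, dot3_comm a c, dot3_comm b c]

lemma dot3_zero_right (a : Fin 3 → ℝ) : dot3 a 0 = 0 := by simp [dot3]

lemma dot3_self_eq_zero {a : Fin 3 → ℝ} (h : dot3 a a = 0) : a = 0 := by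
  have h' := (Finset.sum_eq_zero_iff_of_nonneg (fun i _ => mul_self_nonneg (a i))).1 h
  funext i
  exact mul_self_eq_zero.1 (h' i (Finset.mem_univ i))

lemma trip_rot (x y z : Fin 3 → ℝ) : dot3 (x ⨯₃ y) z = dot3 (y ⨯₃ z) x := by
  simp [dot3, cross_apply, Fin.sum_univ_three]; ring

lemma trip_swap (x y z : Fin 3 → ℝ) : dot3 (x ⨯₃ y) z = -dot3 (y ⨯₃ x) z := by
  simp [dot3, cross_apply, Fin.sum_univ_three]; ring

lemma trip_self_right (x y : Fin 3 → ℝ) : dot3 (x ⨯₃ y) y = 0 := by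
  simp [dot3, cross_apply, Fin.sum_univ_three]; ring

lemma trip_self_left (x y : Fin 3 → ℝ) : dot3 (x ⨯₃ y) x = 0 := by
  simp [dot3, cross_apply, Fin.sum_univ_three]; ring

lemma lagrange3 (a b : Fin 3 → ℝ) :
    dot3 (a ⨯₃ b) (a ⨯₃ b) = dot3 a a * dot3 b b - (dot3 a b) ^ 2 := by
  simp [dot3, cross_apply, Fin.sum_univ_three]; ring

lemma dot3_span {w x : Fin 3 → ℝ} {s : Set (Fin 3 → ℝ)}
    (hx : x ∈ Submodule.span ℝ s) (h : ∀ y ∈ s, dot3 w y = 0) : dot3 w x = 0 := by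
  induction hx using Submodule.span_induction with
  | mem y hy => exact h y hy
  | zero => exact dot3_zero_right w
  | add y z _ _ hy hz => rw [dot3_add_right, hy, hz, add_zero]
  | smul r y _ hy => rw [dot3_smul_right, hy, mul_zero]

/-- If a vector is `dot3`-orthogonal to the frame `a, b, n`, it vanishes. -/
lemma key3 {a b n : Fin 3 → ℝ} (hab : LinearIndependent ℝ ![a, b])
    (hnn : dot3 n n = 1) (hna : dot3 n a = 0) (hnb : dot3 n b = 0)
    {w : Fin 3 → ℝ} (hwa : dot3 w a = 0) (hwb : dot3 w b = 0) (hwn : dot3 w n = 0) :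
    w = 0 := by
  have hind : LinearIndependent ℝ ![n, a, b] := by
    rw [show ![n, a, b] = Fin.cons n ![a, b] from rfl, linearIndependent_fin_cons]
    refine ⟨hab, fun hmem => ?_⟩
    have : dot3 n n = 0 := by
      apply dot3_span hmem
      intro y hy
      rcases hy with ⟨i, rfl⟩
      fin_cases i
      · exact hna
      · exact hnb
    rw [hnn] at this; norm_num at this
  have hspan : Submodule.span ℝ (Set.range ![n, a, b]) = ⊤ :=
    hind.span_eq_top_of_card_eq_finrank (by simp [Module.finrank_fin_fun])
  apply dot3_self_eq_zero
  apply dot3_span (s := Set.range ![n, a, b]) (by rw [hspan]; trivial)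
  intro y hy
  rcases hy with ⟨i, rfl⟩
  fin_cases i
  · exact hwn
  · exact hwa
  · exact hwb

/-- The pointwise linear-algebra heart of the theorem. -/
lemma main_alg {a b n u v : Fin 3 → ℝ} (hab : LinearIndependent ℝ ![a, b])
    (hnn : dot3 n n = 1) (hna : dot3 n a = 0) (hnb : dot3 n b = 0)
    (hor : 0 < dot3 n (a ⨯₃ b))
    (hun : dot3 u n = 0) (hvn : dot3 v n = 0)
    (hub : dot3 u b = 0) (hva : dot3 v a = 0)
    (hepos : 0 < -dot3 u a) (hvb : dot3 v b = dot3 u a) :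
    (dot3 a a * dot3 b b - dot3 a b ^ 2 = dot3 n (a ⨯₃ b) ^ 2) ∧
    a = (dot3 n (a ⨯₃ b) / (-dot3 u a)) • (n ⨯₃ v) ∧
    b = -((dot3 n (a ⨯₃ b) / (-dot3 u a)) • (n ⨯₃ u)) := by
  set W : ℝ := dot3 n (a ⨯₃ b) with hW
  set e : ℝ := -dot3 u a with he
  set E : ℝ := dot3 a a with hE
  set F : ℝ := dot3 a b with hF
  set G : ℝ := dot3 b b with hG
  have hWne : W ≠ 0 := ne_of_gt hor
  have hene : e ≠ 0 := ne_of_gt hepos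
  have hua : dot3 u a = -e := by rw [he]; ring
  have hvb' : dot3 v b = -e := by rw [hvb, hua]
  -- step 1 : a ⨯₃ b = W • n
  have step1 : a ⨯₃ b = W • n := by
    have h0 : a ⨯₃ b - W • n = 0 := by
      apply key3 hab hnn hna hnb
      · rw [dot3_sub_left, dot3_smul_left, trip_self_left, hna]; ring
      · rw [dot3_sub_left, dot3_smul_left, trip_self_right, hnb]; ring
      · rw [dot3_sub_left, dot3_smul_left, hnn, dot3_comm _ n, ← hW]; ring
    exact sub_eq_zero.1 h0
  -- step 2 : Lagrange identity
  have hW2 : E * G - F ^ 2 = W ^ 2 := by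
    have hl := lagrange3 a b
    rw [step1, dot3_smul_left, dot3_smul_right, hnn, ← hE, ← hF, ← hG] at hl
    linear_combination -hl
  refine ⟨hW2, ?_, ?_⟩
  -- useful triple products
  · -- a = (W / e) • (n ⨯₃ v)
    have t2 : dot3 (n ⨯₃ b) a = -W := by
      rw [trip_rot, trip_swap, dot3_comm (a ⨯₃ b) n, ← hW]
    have t3 : dot3 (n ⨯₃ a) b = W := by
      rw [trip_rot, dot3_comm (a ⨯₃ b) n, ← hW]
    have hv : v = (e * F / W ^ 2) • a + (-(e * E) / W ^ 2) • b := by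
      have h0 : v - ((e * F / W ^ 2) • a + (-(e * E) / W ^ 2) • b) = 0 := by
        apply key3 hab hnn hna hnb
        · rw [dot3_sub_left, dot3_add_left, dot3_smul_left, dot3_smul_left, hva,
            ← hE, dot3_comm b a, ← hF]
          field_simp
          ring
        · rw [dot3_sub_left, dot3_add_left, dot3_smul_left, dot3_smul_left, hvb',
            ← hF, ← hG]
          field_simp
          linear_combination e * hW2
        · rw [dot3_sub_left, dot3_add_left, dot3_smul_left, dot3_smul_left, hvn,
            dot3_comm a n, hna, dot3_comm b n, hnb]
          ring
      exact sub_eq_zero.1 h0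
    have hcross : n ⨯₃ v = (e * F / W ^ 2) • (n ⨯₃ a) + (-(e * E) / W ^ 2) • (n ⨯₃ b) := by
      rw [hv]
      simp [map_add, map_smul]
    have h0 : a - (W / e) • (n ⨯₃ v) = 0 := by
      apply key3 hab hnn hna hnb
      · rw [dot3_sub_left, dot3_smul_left, hcross, dot3_add_left, dot3_smul_left,
          dot3_smul_left, trip_self_right, t2, ← hE]
        field_simp
        ring
      · rw [dot3_sub_left, dot3_smul_left, hcross, dot3_add_left, dot3_smul_left,
          dot3_smul_left, t3, trip_self_right, ← hF]
        field_simp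
        ring
      · rw [dot3_sub_left, dot3_smul_left, hcross, dot3_add_left, dot3_smul_left,
          dot3_smul_left, trip_self_left, trip_self_left, dot3_comm a n, hna]
        ring
    have := sub_eq_zero.1 h0
    rw [this]
  · -- b = -((W / e) • (n ⨯₃ u))
    have t2 : dot3 (n ⨯₃ b) a = -W := by
      rw [trip_rot, trip_swap, dot3_comm (a ⨯₃ b) n, ← hW]
    have t3 : dot3 (n ⨯₃ a) b = W := by
      rw [trip_rot, dot3_comm (a ⨯₃ b) n, ← hW]
    have hu : u = (-(e * G) / W ^ 2) • a + (e * F / W ^ 2) • b := by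
      have h0 : u - ((-(e * G) / W ^ 2) • a + (e * F / W ^ 2) • b) = 0 := by
        apply key3 hab hnn hna hnb
        · rw [dot3_sub_left, dot3_add_left, dot3_smul_left, dot3_smul_left, hua,
            ← hE, dot3_comm b a, ← hF]
          field_simp
          linear_combination (-dot3 u a) * hW2
        · rw [dot3_sub_left, dot3_add_left, dot3_smul_left, dot3_smul_left, hub,
            ← hF, ← hG]
          field_simp
          ring
        · rw [dot3_sub_left, dot3_add_left, dot3_smul_left, dot3_smul_left, hun,
            dot3_comm a n, hna, dot3_comm b n, hnb]
          ring
      exact sub_eq_zero.1 h0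
    have hcross : n ⨯₃ u = (-(e * G) / W ^ 2) • (n ⨯₃ a) + (e * F / W ^ 2) • (n ⨯₃ b) := by
      rw [hu]
      simp [map_add, map_smul]
    have h0 : b + (W / e) • (n ⨯₃ u) = 0 := by
      apply key3 hab hnn hna hnb
      · rw [dot3_add_left, dot3_smul_left, hcross, dot3_add_left, dot3_smul_left,
          dot3_smul_left, trip_self_right, t2, dot3_comm b a, ← hF]
        field_simp
        ring
      · rw [dot3_add_left, dot3_smul_left, hcross, dot3_add_left, dot3_smul_left,
          dot3_smul_left, t3, trip_self_right, ← hG]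
        field_simp
        ring
      · rw [dot3_add_left, dot3_smul_left, hcross, dot3_add_left, dot3_smul_left,
          dot3_smul_left, trip_self_left, trip_self_left, dot3_comm b n, hnb]
        ring
    exact eq_neg_of_add_eq_zero_left h0

/-! ### Calculus lemmas -/

lemma hasFDerivAt_dot3 {f g : ℝ × ℝ → Fin 3 → ℝ} {f' g' : (ℝ × ℝ) →L[ℝ] (Fin 3 → ℝ)}
    {p : ℝ × ℝ} (hf : HasFDerivAt f f' p) (hg : HasFDerivAt g g' p) :
    HasFDerivAt (fun q => dot3 (f q) (g q))
      (∑ i : Fin 3, (f p i • ((ContinuousLinearMap.proj i).comp g')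
        + g p i • ((ContinuousLinearMap.proj i).comp f'))) p := by
  have h : ∀ i : Fin 3, HasFDerivAt (fun q => f q i * g q i)
      (f p i • ((ContinuousLinearMap.proj i).comp g')
        + g p i • ((ContinuousLinearMap.proj i).comp f')) p := by
    intro i
    have h1 : HasFDerivAt (fun q => f q i) ((ContinuousLinearMap.proj i).comp f') p :=
      (ContinuousLinearMap.proj (R := ℝ) (φ := fun _ : Fin 3 => ℝ) i).hasFDerivAt.comp p hf
    have h2 : HasFDerivAt (fun q => g q i) ((ContinuousLinearMap.proj i).comp g') p :=
      (ContinuousLinearMap.proj (R := ℝ) (φ := fun _ : Fin 3 => ℝ) i).hasFDerivAt.comp p hg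
    exact h1.mul h2
  have hfun : (fun q => dot3 (f q) (g q)) = ∑ i : Fin 3, fun q => f q i * g q i := by
    ext q; simp [dot3, Finset.sum_apply]
  rw [hfun]
  exact HasFDerivAt.sum (fun i _ => h i)

lemma dot3_deriv_zero {f g : ℝ × ℝ → Fin 3 → ℝ} {U : Set (ℝ × ℝ)} (hU : IsOpen U)
    {p : ℝ × ℝ} (hp : p ∈ U) (hf : DifferentiableAt ℝ f p) (hg : DifferentiableAt ℝ g p)
    {c : ℝ} (hc : ∀ q ∈ U, dot3 (f q) (g q) = c) (w : ℝ × ℝ) :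
    dot3 (fderiv ℝ f p w) (g p) + dot3 (f p) (fderiv ℝ g p w) = 0 := by
  have h1 := hasFDerivAt_dot3 hf.hasFDerivAt hg.hasFDerivAt
  have h2 : HasFDerivAt (fun q => dot3 (f q) (g q)) (0 : (ℝ × ℝ) →L[ℝ] ℝ) p := by
    refine HasFDerivAt.congr_of_eventuallyEq (hasFDerivAt_const (𝕜 := ℝ) (E := ℝ × ℝ) c p) ?_
    filter_upwards [hU.mem_nhds hp] with q hq
    exact hc q hq
  have h3 := h1.unique h2
  have h4 := DFunLike.congr_fun h3 w
  simp only [ContinuousLinearMap.coe_sum', Finset.sum_apply, ContinuousLinearMap.add_apply,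
    ContinuousLinearMap.coe_smul', Pi.smul_apply, ContinuousLinearMap.coe_comp',
    Function.comp_apply, ContinuousLinearMap.proj_apply, ContinuousLinearMap.zero_apply,
    smul_eq_mul] at h4
  rw [← h4, dot3, dot3, ← Finset.sum_add_distrib]
  exact Finset.sum_congr rfl fun i _ => by ring

theorem stmt0
    (U : Set (ℝ × ℝ)) (hUopen : IsOpen U) (hUconn : IsConnected U)
    (φ N : ℝ × ℝ → Fin 3 → ℝ)
    (hφ : ContDiffOn ℝ (⊤ : ℕ∞) φ U) (hN : ContDiffOn ℝ (⊤ : ℕ∞) N U)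
    (himm : ∀ p ∈ U, LinearIndependent ℝ ![pdx φ p, pdy φ p])
    (hNunit : ∀ p ∈ U, dot3 (N p) (N p) = 1)
    (hNφx : ∀ p ∈ U, dot3 (N p) (pdx φ p) = 0)
    (hNφy : ∀ p ∈ U, dot3 (N p) (pdy φ p) = 0)
    (horient : ∀ p ∈ U, 0 < dot3 (N p) (pdx φ p ⨯₃ pdy φ p))
    -- z is a conformal parameter for the second fundamental form: f ≡ 0, e = g₂ > 0
    (hf : ∀ p ∈ U, -dot3 (pdx N p) (pdy φ p) = 0)
    (heg : ∀ p ∈ U, -dot3 (pdx N p) (pdx φ p) = -dot3 (pdy N p) (pdy φ p))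
    (hepos : ∀ p ∈ U, 0 < -dot3 (pdx N p) (pdx φ p))
    -- the extrinsic curvature
    (K : ℝ × ℝ → ℝ)
    (hK : ∀ p ∈ U, K p =
      ((-dot3 (pdx N p) (pdx φ p)) * (-dot3 (pdy N p) (pdy φ p))
          - (-dot3 (pdx N p) (pdy φ p)) ^ 2) /
        (dot3 (pdx φ p) (pdx φ p) * dot3 (pdy φ p) (pdy φ p)
          - (dot3 (pdx φ p) (pdy φ p)) ^ 2)) :
    ∀ p ∈ U,
      pdx φ p = (1 / Real.sqrt (K p)) • (N p ⨯₃ pdy N p) ∧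
      pdy φ p = -((1 / Real.sqrt (K p)) • (N p ⨯₃ pdx N p)) := by
  intro p hp
  have hmem : U ∈ nhds p := hUopen.mem_nhds hp
  have hdφ : DifferentiableAt ℝ φ p := (hφ.contDiffAt hmem).differentiableAt (by simp)
  have hdN : DifferentiableAt ℝ N p := (hN.contDiffAt hmem).differentiableAt (by simp)
  have hdfd : DifferentiableAt ℝ (fderiv ℝ φ) p :=
    ((hφ.fderiv_of_isOpen (m := 1) hUopen (WithTop.coe_le_coe.mpr le_top)).contDiffAt hmem).differentiableAt (by simp)
  -- second derivative
  set f'' := fderiv ℝ (fderiv ℝ φ) p with hf''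
  have hpdx : HasFDerivAt (pdx φ)
      ((ContinuousLinearMap.apply ℝ (Fin 3 → ℝ) ((1 : ℝ), (0 : ℝ))).comp f'') p := by
    unfold pdx
    exact (ContinuousLinearMap.apply ℝ (Fin 3 → ℝ) ((1 : ℝ), (0 : ℝ))).hasFDerivAt.comp p
      hdfd.hasFDerivAt
  have hpdy : HasFDerivAt (pdy φ)
      ((ContinuousLinearMap.apply ℝ (Fin 3 → ℝ) ((0 : ℝ), (1 : ℝ))).comp f'') p := by
    unfold pdy
    exact (ContinuousLinearMap.apply ℝ (Fin 3 → ℝ) ((0 : ℝ), (1 : ℝ))).hasFDerivAt.comp p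
      hdfd.hasFDerivAt
  -- unit normal: N_x ⟂ N and N_y ⟂ N
  have hNN := dot3_deriv_zero hUopen hp hdN hdN hNunit
  have hun : dot3 (pdx N p) (N p) = 0 := by
    have h := hNN ((1 : ℝ), (0 : ℝ))
    rw [dot3_comm (N p)] at h
    have : pdx N p = fderiv ℝ N p ((1 : ℝ), (0 : ℝ)) := rfl
    rw [this]
    linarith
  have hvn : dot3 (pdy N p) (N p) = 0 := by
    have h := hNN ((0 : ℝ), (1 : ℝ))
    rw [dot3_comm (N p)] at h
    have : pdy N p = fderiv ℝ N p ((0 : ℝ), (1 : ℝ)) := rfl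
    rw [this]
    linarith
  -- symmetry of second derivatives gives ⟨N_y, φ_x⟩ = ⟨N_x, φ_y⟩ = 0
  have hsym : f'' ((1 : ℝ), (0 : ℝ)) ((0 : ℝ), (1 : ℝ))
      = f'' ((0 : ℝ), (1 : ℝ)) ((1 : ℝ), (0 : ℝ)) :=
    (hφ.contDiffAt hmem).isSymmSndFDerivAt (by norm_num; exact WithTop.coe_le_coe.mpr le_top) _ _
  have hB := dot3_deriv_zero hUopen hp hdN hpdy.differentiableAt hNφy ((1 : ℝ), (0 : ℝ))
  have hA := dot3_deriv_zero hUopen hp hdN hpdx.differentiableAt hNφx ((0 : ℝ), (1 : ℝ))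
  rw [hpdy.fderiv] at hB
  rw [hpdx.fderiv] at hA
  simp only [ContinuousLinearMap.coe_comp', Function.comp_apply,
    ContinuousLinearMap.apply_apply] at hA hB
  have hub : dot3 (pdx N p) (pdy φ p) = 0 := by have := hf p hp; linarith
  have hNxy : dot3 (N p) (f'' ((1 : ℝ), (0 : ℝ)) ((0 : ℝ), (1 : ℝ))) = 0 := by
    have : pdx N p = fderiv ℝ N p ((1 : ℝ), (0 : ℝ)) := rfl
    rw [this] at hub
    linarith
  have hva : dot3 (pdy N p) (pdx φ p) = 0 := by
    have : pdy N p = fderiv ℝ N p ((0 : ℝ), (1 : ℝ)) := rfl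
    rw [this]
    rw [hsym] at hNxy
    linarith
  -- apply the linear algebra lemma
  have hvb : dot3 (pdy N p) (pdy φ p) = dot3 (pdx N p) (pdx φ p) := by
    have := heg p hp; linarith
  obtain ⟨hW2, g1, g2⟩ := main_alg (himm p hp) (hNunit p hp) (hNφx p hp) (hNφy p hp)
    (horient p hp) hun hvn hub hva (hepos p hp) hvb
  -- identify the coefficient
  set W : ℝ := dot3 (N p) (pdx φ p ⨯₃ pdy φ p) with hWdef
  set e : ℝ := -dot3 (pdx N p) (pdx φ p) with hedef
  have hWpos : 0 < W := horient p hp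
  have hepos' : 0 < e := hepos p hp
  have hKval : K p = (e / W) ^ 2 := by
    rw [hK p hp, hW2, ← heg p hp, hf p hp]
    rw [div_pow]
    rw [← hedef]
    ring_nf
  have hsqrt : Real.sqrt (K p) = e / W := by
    rw [hKval]
    exact Real.sqrt_sq (by positivity)
  have hcoeff : 1 / Real.sqrt (K p) = W / e := by
    rw [hsqrt, one_div_div]
  rw [hcoeff]
  exact ⟨g1, g2⟩
end
end

section
/- Let ψ, N, K be as in the setup (smooth immersion of U into the unit quaternions with positively oriented unit normal N in 𝕊³, coordinates z = x+iy conformal for the positive definite second fundamental form, positive extrinsic curvature K). Then on all of U, ψₓ = (1/√K) · ψ · ((ψ̄N) ⊠ (ψ̄Nᵧ)) and ψᵧ = −(1/√K) · ψ · ((ψ̄N) ⊠ (ψ̄Nₓ)), where for quaternions p, q one sets p ⊠ q := (1/2)(pq − qp) (the cross product of imaginary quaternions) and all products are quaternion products. (This is the identity ψ_z = (i/√K) N ×_ψ ∇_{∂z}N of Proposition 2.1 specialized to 𝕊³.) -/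
noncomputable section

open scoped RealInnerProductSpace Quaternion
open Complex

/-- Wirtinger derivative ∂/∂z = (1/2)(∂ₓ - i ∂ᵧ). -/
def dz (f : ℝ × ℝ → ℂ) (p : ℝ × ℝ) : ℂ := (1 / 2 : ℂ) * (pdx f p - Complex.I * pdy f p)

/-- Wirtinger derivative ∂/∂z̄ = (1/2)(∂ₓ + i ∂ᵧ). -/
def dzb (f : ℝ × ℝ → ℂ) (p : ℝ × ℝ) : ℂ := (1 / 2 : ℂ) * (pdx f p + Complex.I * pdy f p)

/-- Complex conjugate of a complex-valued map. -/
def conjf (f : ℝ × ℝ → ℂ) : ℝ × ℝ → ℂ := fun p => (starRingEnd ℂ) (f p)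

/-- Cross product of (imaginary) quaternions: p ⊠ q = (1/2)(pq - qp). -/
def qcross (p q : ℍ[ℝ]) : ℍ[ℝ] := (1 / 2 : ℝ) • (p * q - q * p)

def qi : ℍ[ℝ] := ⟨0, 1, 0, 0⟩
def qj : ℍ[ℝ] := ⟨0, 0, 1, 0⟩
def qk : ℍ[ℝ] := ⟨0, 0, 0, 1⟩

/-- Left translation of the normal to the identity: Nᵉ = ψ̄ N. -/
def NeQ (ψ N : ℝ × ℝ → ℍ[ℝ]) (p : ℝ × ℝ) : ℍ[ℝ] := star (ψ p) * N p

/-- First component N₁ of Nᵉ = N₁ j + N₂ k + N₃ i. -/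
def gN1 (ψ N : ℝ × ℝ → ℍ[ℝ]) (p : ℝ × ℝ) : ℝ := (NeQ ψ N p).imJ

/-- Second component N₂ of Nᵉ = N₁ j + N₂ k + N₃ i. -/
def gN2 (ψ N : ℝ × ℝ → ℍ[ℝ]) (p : ℝ × ℝ) : ℝ := (NeQ ψ N p).imK

/-- Third component N₃ of Nᵉ = N₁ j + N₂ k + N₃ i. -/
def gN3 (ψ N : ℝ × ℝ → ℍ[ℝ]) (p : ℝ × ℝ) : ℝ := (NeQ ψ N p).imI

/-- The Gauss map g = (N₁ + i N₂)/(1 - N₃). -/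
def gauss (ψ N : ℝ × ℝ → ℍ[ℝ]) (p : ℝ × ℝ) : ℂ :=
  ((gN1 ψ N p : ℂ) + (gN2 ψ N p : ℂ) * Complex.I) / (1 - (gN3 ψ N p : ℂ))

/-- The extrinsic curvature of a surface in 𝕊³ (unit quaternions). -/
def extKq (ψ N : ℝ × ℝ → ℍ[ℝ]) (p : ℝ × ℝ) : ℝ :=
  ((-⟪pdx N p, pdx ψ p⟫) * (-⟪pdy N p, pdy ψ p⟫) - (-⟪pdx N p, pdy ψ p⟫) ^ 2) /
    (⟪pdx ψ p, pdx ψ p⟫ * ⟪pdy ψ p, pdy ψ p⟫ - ⟪pdx ψ p, pdy ψ p⟫ ^ 2)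

section QBash
attribute [local simp] Quaternion.inner_def qcross Quaternion.re_mul Quaternion.imI_mul
  Quaternion.imJ_mul Quaternion.imK_mul

lemma inner_qcross_left (p q : ℍ[ℝ]) : ⟪qcross p q, p⟫ = 0 := by simp; ring
lemma inner_qcross_right (p q : ℍ[ℝ]) : ⟪qcross p q, q⟫ = 0 := by simp; ring
lemma inner_qcross_one_aux (p q : ℍ[ℝ]) : ⟪qcross p q, (1:ℍ[ℝ])⟫ = 0 := by simp; ring
lemma qcross_cyclic {p q r : ℍ[ℝ]} (hp : p.re = 0) (hq : q.re = 0) (hr : r.re = 0) :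
    ⟪qcross p q, r⟫ = ⟪qcross q r, p⟫ := by
  simp; obtain ⟨p0,p1,p2,p3⟩ := p; obtain ⟨q0,q1,q2,q3⟩ := q; obtain ⟨r0,r1,r2,r3⟩ := r
  simp_all; ring
lemma qcross_lagrange {p q : ℍ[ℝ]} (hp : p.re = 0) (hq : q.re = 0) :
    ⟪qcross p q, qcross p q⟫ = ⟪p,p⟫*⟪q,q⟫ - ⟪p,q⟫^2 := by
  simp [-inner_self_eq_norm_sq_to_K, hp, hq]; ring
lemma inner_qmul_left (u a b : ℍ[ℝ]) : ⟪u*a, u*b⟫ = ⟪u,u⟫ * ⟪a,b⟫ := by simp [-inner_self_eq_norm_sq_to_K]; ring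
lemma re_star_mul (u a : ℍ[ℝ]) : (star u * a).re = ⟪a, u⟫ := by simp; try ring
lemma inner_star_star (u : ℍ[ℝ]) : ⟪star u, star u⟫ = ⟪u,u⟫ := by simp; try ring
lemma inner_one_left' (a : ℍ[ℝ]) : ⟪a, (1:ℍ[ℝ])⟫ = a.re := by simp
lemma inner_one_one' : ⟪(1:ℍ[ℝ]), (1:ℍ[ℝ])⟫ = 1 := by simp
lemma qcross_swap (p q : ℍ[ℝ]) : qcross q p = -qcross p q := by unfold qcross; module
end QBash

lemma qcross_comb (n X Y : ℍ[ℝ]) (a b : ℝ) :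
    qcross n (a • X + b • Y) = a • qcross n X + b • qcross n Y := by
  unfold qcross
  simp only [mul_add, add_mul, mul_smul_comm, smul_mul_assoc, smul_smul, smul_sub, smul_add]
  module
lemma u_mul_star_mul {u : ℍ[ℝ]} (hu : ⟪u,u⟫ = 1) (w : ℍ[ℝ]) : u * (star u * w) = w := by
  rw [← mul_assoc, Quaternion.self_mul_star]
  have : Quaternion.normSq u = 1 := by rw [← Quaternion.inner_self]; exact_mod_cast hu
  rw [this]; simp

lemma pair_indep_coeffs {A B : ℍ[ℝ]} (hAB : LinearIndependent ℝ ![A, B]) {a b : ℝ}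
    (h : a • A + b • B = 0) : a = 0 ∧ b = 0 := by
  have := Fintype.linearIndependent_iff.mp hAB ![a, b] (by
    simpa [Fin.sum_univ_two] using h)
  exact ⟨this 0, this 1⟩

lemma eq_zero_of_orth {u n A B D : ℍ[ℝ]} (hu : ⟪u,u⟫ = 1) (hn : ⟪n,n⟫ = 1)
    (hun : ⟪u,n⟫ = 0) (huA : ⟪u,A⟫ = 0) (huB : ⟪u,B⟫ = 0)
    (hnA : ⟪n,A⟫ = 0) (hnB : ⟪n,B⟫ = 0)
    (hAB : LinearIndependent ℝ ![A, B])
    (hDu : ⟪D,u⟫ = 0) (hDn : ⟪D,n⟫ = 0) (hDA : ⟪D,A⟫ = 0) (hDB : ⟪D,B⟫ = 0) : D = 0 := by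
  have hind : LinearIndependent ℝ ![u, n, A, B] := by
    rw [Fintype.linearIndependent_iff]
    intro g hg
    have hsum : g 0 • u + g 1 • n + g 2 • A + g 3 • B = 0 := by
      simpa [Fin.sum_univ_four] using hg
    have h0 : g 0 = 0 := by
      have := congrArg (fun w => ⟪u, w⟫) hsum
      simpa [-inner_self_eq_norm_sq_to_K, inner_add_right, inner_smul_right, hu, hun, huA, huB] using this
    have hnu : ⟪n,u⟫ = 0 := by rw [real_inner_comm]; exact hun
    have h1 : g 1 = 0 := by
      have := congrArg (fun w => ⟪n, w⟫) hsum
      simpa [-inner_self_eq_norm_sq_to_K, inner_add_right, inner_smul_right, hn, hnu, hnA, hnB] using this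
    have h23 : g 2 • A + g 3 • B = 0 := by
      rw [h0, h1] at hsum; simpa using hsum
    obtain ⟨h2, h3⟩ := pair_indep_coeffs hAB h23
    intro i; fin_cases i <;> assumption
  have hspan : Submodule.span ℝ (Set.range ![u, n, A, B]) = ⊤ := by
    apply hind.span_eq_top_of_card_eq_finrank
    simp [Quaternion.finrank_eq_four]
  have hDmem : D ∈ Submodule.span ℝ (Set.range ![u, n, A, B]) := by rw [hspan]; trivial
  have key : ∀ x ∈ Submodule.span ℝ (Set.range ![u, n, A, B]), ⟪D, x⟫ = 0 := by
    intro x hx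
    induction hx using Submodule.span_induction with
    | mem x hx =>
      obtain ⟨i, rfl⟩ := hx
      fin_cases i <;> assumption
    | zero => simp
    | add x y _ _ hx hy => rw [inner_add_right, hx, hy]; ring
    | smul c x _ hx => rw [real_inner_smul_right, hx]; ring
  exact inner_self_eq_zero.mp (key D hDmem)

set_option maxHeartbeats 1000000 in
lemma main_alg_s2 (u n A B M V : ℍ[ℝ]) (k : ℝ)
    (huu : ⟪u,u⟫ = 1) (hnn : ⟪n,n⟫ = 1) (hnu : ⟪n,u⟫ = 0)
    (hAu : ⟪A,u⟫ = 0) (hBu : ⟪B,u⟫ = 0) (hnA : ⟪n,A⟫ = 0) (hnB : ⟪n,B⟫ = 0)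
    (hAB : LinearIndependent ℝ ![A,B])
    (hor : 0 < ⟪star u * n, qcross (star u * A) (star u * B)⟫)
    (hMu : ⟪M,u⟫ = 0) (hMn : ⟪M,n⟫ = 0) (hMB : ⟪M,B⟫ = 0)
    (hVu : ⟪V,u⟫ = 0) (hVn : ⟪V,n⟫ = 0) (hVA : ⟪V,A⟫ = 0)
    (hVB : ⟪V,B⟫ = ⟪M,A⟫)
    (he : 0 < -⟪M,A⟫)
    (hk : k = ((-⟪M,A⟫) * (-⟪V,B⟫) - (-⟪M,B⟫)^2) / (⟪A,A⟫*⟪B,B⟫ - ⟪A,B⟫^2)) :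
    A = (1 / Real.sqrt k) • (u * qcross (star u * n) (star u * V)) ∧
    B = -((1 / Real.sqrt k) • (u * qcross (star u * n) (star u * M))) := by
  set E := ⟪A,A⟫ with hE
  set F := ⟪A,B⟫ with hF
  set G := ⟪B,B⟫ with hG
  set e := -⟪M,A⟫ with hedef
  set su := star u with hsu
  have hsuu : ⟪su,su⟫ = 1 := by rw [hsu, inner_star_star, huu]
  set X' := su * A with hX'
  set Y' := su * B with hY'
  set n' := su * n with hn'
  -- translated inner products
  have hEX : ⟪X',X'⟫ = E := by rw [hX', inner_qmul_left, hsuu, one_mul]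
  have hFX : ⟪X',Y'⟫ = F := by rw [hX', hY', inner_qmul_left, hsuu, one_mul]
  have hGX : ⟪Y',Y'⟫ = G := by rw [hY', inner_qmul_left, hsuu, one_mul]
  have hn'n' : ⟪n',n'⟫ = 1 := by rw [hn', inner_qmul_left, hsuu, one_mul, hnn]
  have hn'X : ⟪n',X'⟫ = 0 := by rw [hn', hX', inner_qmul_left, hsuu, one_mul, hnA]
  have hn'Y : ⟪n',Y'⟫ = 0 := by rw [hn', hY', inner_qmul_left, hsuu, one_mul, hnB]
  -- imaginary parts
  have hX're : X'.re = 0 := by rw [hX', hsu, re_star_mul, hAu]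
  have hY're : Y'.re = 0 := by rw [hY', hsu, re_star_mul, hBu]
  have hn're : n'.re = 0 := by rw [hn', hsu, re_star_mul, hnu]
  have hXn' : ⟪X',n'⟫ = 0 := by rw [real_inner_comm]; exact hn'X
  have hYn' : ⟪Y',n'⟫ = 0 := by rw [real_inner_comm]; exact hn'Y
  have hAn : ⟪A,n⟫ = 0 := by rw [real_inner_comm]; exact hnA
  have hBn : ⟪B,n⟫ = 0 := by rw [real_inner_comm]; exact hnB
  have hBA : ⟪B,A⟫ = F := by rw [real_inner_comm]
  have hYX : ⟪Y',X'⟫ = F := by rw [real_inner_comm]; exact hFX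
  have hn'1 : ⟪n', (1:ℍ[ℝ])⟫ = 0 := by rw [inner_one_left', hn're]
  have hX1 : ⟪X', (1:ℍ[ℝ])⟫ = 0 := by rw [inner_one_left', hX're]
  have hY1 : ⟪Y', (1:ℍ[ℝ])⟫ = 0 := by rw [inner_one_left', hY're]
  have h1n' : ⟪(1:ℍ[ℝ]), n'⟫ = 0 := by rw [real_inner_comm]; exact hn'1
  have h1X : ⟪(1:ℍ[ℝ]), X'⟫ = 0 := by rw [real_inner_comm]; exact hX1
  have h1Y : ⟪(1:ℍ[ℝ]), Y'⟫ = 0 := by rw [real_inner_comm]; exact hY1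
  -- linear independence of X', Y'
  have hu0 : u ≠ 0 := by
    intro h; rw [h] at huu; simp at huu
  have hsu0 : su ≠ 0 := by rw [hsu]; exact star_ne_zero.mpr hu0
  have hXYind : LinearIndependent ℝ ![X', Y'] := by
    have hinj : Function.Injective (LinearMap.mulLeft ℝ su) := by
      intro x y hxy
      exact mul_left_cancel₀ hsu0 hxy
    have := hAB.map' (LinearMap.mulLeft ℝ su) (LinearMap.ker_eq_bot.mpr hinj)
    convert this using 1
    funext i; fin_cases i <;> rfl
    all_goals rfl
  -- the orientation scalar
  set lam := ⟪qcross X' Y', n'⟫ with hlam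
  have hlampos : 0 < lam := by
    rw [hlam, real_inner_comm]; exact hor
  have hlam0 : lam ≠ 0 := ne_of_gt hlampos
  -- qcross X' Y' = lam • n'
  have hCn : qcross X' Y' = lam • n' := by
    have hD := eq_zero_of_orth (u := 1) (n := n') (A := X') (B := Y')
      (D := qcross X' Y' - lam • n')
      inner_one_one' hn'n' h1n' h1X h1Y hn'X hn'Y hXYind
      (by simp [inner_sub_left, real_inner_smul_left, inner_qcross_one_aux, hn'1])
      (by simp [-inner_self_eq_norm_sq_to_K, inner_sub_left, real_inner_smul_left, hn'n', ← hlam])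
      (by simp [inner_sub_left, real_inner_smul_left, inner_qcross_left, hXn', hn'X])
      (by simp [inner_sub_left, real_inner_smul_left, inner_qcross_right, hYn', hn'Y])
    exact sub_eq_zero.mp hD
  -- lam^2 = E G - F^2
  have hlam2 : lam ^ 2 = E * G - F ^ 2 := by
    have h1 := qcross_lagrange hX're hY're
    rw [hEX, hFX, hGX, hCn] at h1
    rw [real_inner_smul_left, real_inner_smul_right, hn'n'] at h1
    linear_combination h1
  -- decomposition of V
  have hVBe : ⟪V,B⟫ = -e := by rw [hVB, hedef]; ring
  have hunn : ⟪u,n⟫ = 0 := by rw [real_inner_comm]; exact hnu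
  have huA : ⟪u,A⟫ = 0 := by rw [real_inner_comm]; exact hAu
  have huB : ⟪u,B⟫ = 0 := by rw [real_inner_comm]; exact hBu
  have hVd : V = (e*F/lam^2) • A + (-(e*E)/lam^2) • B := by
    have hD := eq_zero_of_orth (u := u) (n := n) (A := A) (B := B)
      (D := V - ((e*F/lam^2) • A + (-(e*E)/lam^2) • B))
      huu hnn hunn huA huB hnA hnB hAB
      (by simp [inner_sub_left, inner_add_left, real_inner_smul_left, hVu, hAu, hBu])
      (by simp [inner_sub_left, inner_add_left, real_inner_smul_left, hVn, hAn, hBn])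
      (by
        simp only [inner_sub_left, inner_add_left, real_inner_smul_left, hVA, ← hE, hBA]
        ring)
      (by
        simp only [inner_sub_left, inner_add_left, real_inner_smul_left, hVBe, ← hG, ← hF]
        field_simp
        linear_combination (-e) * hlam2)
    exact (sub_eq_zero.mp hD)
  -- decomposition of M
  have hMAe : ⟪M,A⟫ = -e := by rw [hedef]; ring
  have hMd : M = (-(e*G)/lam^2) • A + (e*F/lam^2) • B := by
    have hD := eq_zero_of_orth (u := u) (n := n) (A := A) (B := B)
      (D := M - ((-(e*G)/lam^2) • A + (e*F/lam^2) • B))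
      huu hnn hunn huA huB hnA hnB hAB
      (by simp [inner_sub_left, inner_add_left, real_inner_smul_left, hMu, hAu, hBu])
      (by simp [inner_sub_left, inner_add_left, real_inner_smul_left, hMn, hAn, hBn])
      (by
        simp only [inner_sub_left, inner_add_left, real_inner_smul_left, hMAe, ← hE, hBA]
        field_simp
        linear_combination ⟪M,A⟫ * hlam2)
      (by
        simp only [inner_sub_left, inner_add_left, real_inner_smul_left, hMB, ← hG, ← hF]
        ring)
    exact (sub_eq_zero.mp hD)
  -- triple product values
  have t1 : ⟪qcross n' X', Y'⟫ = lam := by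
    rw [qcross_cyclic hn're hX're hY're, ← hlam]
  have t2 : ⟪qcross n' Y', X'⟫ = -lam := by
    rw [qcross_cyclic hn're hY're hX're, qcross_swap, inner_neg_left, ← hlam]
  -- the two cross product computations
  have hV' : su * V = (e*F/lam^2) • X' + (-(e*E)/lam^2) • Y' := by
    rw [hVd, mul_add, mul_smul_comm, mul_smul_comm, hX', hY']
  have hM' : su * M = (-(e*G)/lam^2) • X' + (e*F/lam^2) • Y' := by
    rw [hMd, mul_add, mul_smul_comm, mul_smul_comm, hX', hY']
  have hcombV := qcross_comb n' X' Y' (e*F/lam^2) (-(e*E)/lam^2)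
  have hcombM := qcross_comb n' X' Y' (-(e*G)/lam^2) (e*F/lam^2)
  have hcrossV : qcross n' (su * V) = (e/lam) • X' := by
    rw [hV', hcombV]
    have hD := eq_zero_of_orth (u := 1) (n := n') (A := X') (B := Y')
      (D := ((e*F/lam^2) • qcross n' X' + (-(e*E)/lam^2) • qcross n' Y') - (e/lam) • X')
      inner_one_one' hn'n' h1n' h1X h1Y hn'X hn'Y hXYind
      (by simp [inner_sub_left, inner_add_left, real_inner_smul_left, inner_qcross_one_aux, hX1])
      (by simp [inner_sub_left, inner_add_left, real_inner_smul_left, inner_qcross_left, hXn'])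
      (by
        simp only [inner_sub_left, inner_add_left, real_inner_smul_left,
          inner_qcross_left, inner_qcross_right, t2, hEX]
        field_simp
        try ring)
      (by
        simp only [inner_sub_left, inner_add_left, real_inner_smul_left,
          inner_qcross_left, inner_qcross_right, t1, hFX]
        field_simp
        try ring)
    exact sub_eq_zero.mp hD
  have hcrossM : qcross n' (su * M) = (-(e/lam)) • Y' := by
    rw [hM', hcombM]
    have hD := eq_zero_of_orth (u := 1) (n := n') (A := X') (B := Y')
      (D := ((-(e*G)/lam^2) • qcross n' X' + (e*F/lam^2) • qcross n' Y') - (-(e/lam)) • Y')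
      inner_one_one' hn'n' h1n' h1X h1Y hn'X hn'Y hXYind
      (by simp [inner_sub_left, inner_add_left, real_inner_smul_left, inner_qcross_one_aux, hY1])
      (by simp [inner_sub_left, inner_add_left, real_inner_smul_left, inner_qcross_left, hYn'])
      (by
        simp only [inner_sub_left, inner_add_left, real_inner_smul_left,
          inner_qcross_left, inner_qcross_right, t2, hYX]
        field_simp
        try ring)
      (by
        simp only [inner_sub_left, inner_add_left, real_inner_smul_left,
          inner_qcross_left, inner_qcross_right, t1, hGX]
        field_simp
        try ring)
    exact sub_eq_zero.mp hD
  -- sqrt k = e / lam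
  have hepos : 0 < e := he
  have hsqrt : Real.sqrt k = e / lam := by
    have hkval : k = (e/lam)^2 := by
      rw [hk, hVBe, hMB, ← hlam2]
      field_simp
      try ring
    rw [hkval, Real.sqrt_sq (le_of_lt (div_pos hepos hlampos))]
  have hel0 : e / lam ≠ 0 := ne_of_gt (div_pos hepos hlampos)
  constructor
  · rw [hsqrt, hcrossV, mul_smul_comm, hX', hsu, u_mul_star_mul huu A, smul_smul,
      one_div, inv_mul_cancel₀ hel0, one_smul]
  · have hsc : 1 / (e/lam) * -(e/lam) = -1 := by field_simp; try ring
    rw [hsqrt, hcrossM, mul_smul_comm, hY', hsu, u_mul_star_mul huu B, smul_smul, hsc]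
    simp

lemma inner_fderiv_zero {f g : ℝ × ℝ → ℍ[ℝ]} {p : ℝ × ℝ} {c : ℝ}
    (hf : DifferentiableAt ℝ f p) (hg : DifferentiableAt ℝ g p)
    (h : ∀ᶠ q in nhds p, ⟪f q, g q⟫ = c) (v : ℝ × ℝ) :
    ⟪fderiv ℝ f p v, g p⟫ + ⟪f p, fderiv ℝ g p v⟫ = 0 := by
  have h1 := hf.hasFDerivAt.inner ℝ hg.hasFDerivAt
  have h2 : HasFDerivAt (fun q => ⟪f q, g q⟫) (0 : (ℝ × ℝ) →L[ℝ] ℝ) p :=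
    (hasFDerivAt_const c p).congr_of_eventuallyEq h
  have h3 := h1.unique h2
  have h4 := congrArg (fun L : (ℝ × ℝ) →L[ℝ] ℝ => L v) h3
  simp only [ContinuousLinearMap.comp_apply, ContinuousLinearMap.prod_apply,
    fderivInnerCLM_apply, ContinuousLinearMap.zero_apply] at h4
  linarith [real_inner_comm (f p) (fderiv ℝ g p v)]

lemma diff_pdx {ψ : ℝ × ℝ → ℍ[ℝ]} {p : ℝ × ℝ} (hψp : ContDiffAt ℝ (⊤ : ℕ∞) ψ p) :
    DifferentiableAt ℝ (fun q => pdx ψ q) p := by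
  have hd : DifferentiableAt ℝ (fderiv ℝ ψ) p :=
    (hψp.fderiv_right (m := 1) (WithTop.coe_le_coe.mpr le_top)).differentiableAt one_ne_zero
  exact hd.clm_apply (differentiableAt_const _)

lemma diff_pdy {ψ : ℝ × ℝ → ℍ[ℝ]} {p : ℝ × ℝ} (hψp : ContDiffAt ℝ (⊤ : ℕ∞) ψ p) :
    DifferentiableAt ℝ (fun q => pdy ψ q) p := by
  have hd : DifferentiableAt ℝ (fderiv ℝ ψ) p :=
    (hψp.fderiv_right (m := 1) (WithTop.coe_le_coe.mpr le_top)).differentiableAt one_ne_zero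
  exact hd.clm_apply (differentiableAt_const _)

lemma clairaut {ψ : ℝ × ℝ → ℍ[ℝ]} {p : ℝ × ℝ} (hψp : ContDiffAt ℝ (⊤ : ℕ∞) ψ p) :
    fderiv ℝ (fun q => pdx ψ q) p (0, 1) = fderiv ℝ (fun q => pdy ψ q) p (1, 0) := by
  have hd : DifferentiableAt ℝ (fderiv ℝ ψ) p :=
    (hψp.fderiv_right (m := 1) (WithTop.coe_le_coe.mpr le_top)).differentiableAt one_ne_zero
  have hsymm := hψp.isSymmSndFDerivAt (by rw [minSmoothness_of_isRCLikeNormedField]; exact WithTop.coe_le_coe.mpr le_top)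
  have e1 : fderiv ℝ (fun q => pdx ψ q) p =
      (fderiv ℝ ψ p).comp (fderiv ℝ (fun _ : ℝ × ℝ => ((1:ℝ), (0:ℝ))) p) +
        (fderiv ℝ (fderiv ℝ ψ) p).flip (1, 0) :=
    fderiv_clm_apply hd (differentiableAt_const _)
  have e2 : fderiv ℝ (fun q => pdy ψ q) p =
      (fderiv ℝ ψ p).comp (fderiv ℝ (fun _ : ℝ × ℝ => ((0:ℝ), (1:ℝ))) p) +
        (fderiv ℝ (fderiv ℝ ψ) p).flip (0, 1) :=
    fderiv_clm_apply hd (differentiableAt_const _)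
  rw [e1, e2]
  simp only [fderiv_const_apply, Pi.zero_apply, ContinuousLinearMap.comp_zero, zero_add,
    ContinuousLinearMap.add_apply, ContinuousLinearMap.flip_apply]
  exact hsymm.eq (0,1) (1,0)

theorem stmt2
    (U : Set (ℝ × ℝ)) (hUopen : IsOpen U) (hUconn : IsConnected U)
    (ψ N : ℝ × ℝ → ℍ[ℝ])
    (hψ : ContDiffOn ℝ (⊤ : ℕ∞) ψ U) (hN : ContDiffOn ℝ (⊤ : ℕ∞) N U)
    (hψnorm : ∀ p ∈ U, ‖ψ p‖ = 1)
    (himm : ∀ p ∈ U, LinearIndependent ℝ ![pdx ψ p, pdy ψ p])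
    (hNnorm : ∀ p ∈ U, ‖N p‖ = 1)
    (hNψ : ∀ p ∈ U, ⟪N p, ψ p⟫ = 0)
    (hNψx : ∀ p ∈ U, ⟪N p, pdx ψ p⟫ = 0)
    (hNψy : ∀ p ∈ U, ⟪N p, pdy ψ p⟫ = 0)
    (horient : ∀ p ∈ U,
      0 < ⟪star (ψ p) * N p, qcross (star (ψ p) * pdx ψ p) (star (ψ p) * pdy ψ p)⟫)
    -- z is a conformal parameter for the second fundamental form: f ≡ 0, e = g₂ > 0
    (hf : ∀ p ∈ U, -⟪pdx N p, pdy ψ p⟫ = 0)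
    (heg : ∀ p ∈ U, -⟪pdx N p, pdx ψ p⟫ = -⟪pdy N p, pdy ψ p⟫)
    (hepos : ∀ p ∈ U, 0 < -⟪pdx N p, pdx ψ p⟫)
    -- the extrinsic curvature
    (K : ℝ × ℝ → ℝ) (hK : ∀ p ∈ U, K p = extKq ψ N p)
    :
    ∀ p ∈ U,
      pdx ψ p = (1 / Real.sqrt (K p)) •
          (ψ p * qcross (star (ψ p) * N p) (star (ψ p) * pdy N p)) ∧
      pdy ψ p = -((1 / Real.sqrt (K p)) •
          (ψ p * qcross (star (ψ p) * N p) (star (ψ p) * pdx N p))) := by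
  intro p hp
  have hmem : U ∈ nhds p := hUopen.mem_nhds hp
  have hψp : ContDiffAt ℝ (⊤ : ℕ∞) ψ p := hψ.contDiffAt hmem
  have hNp : ContDiffAt ℝ (⊤ : ℕ∞) N p := hN.contDiffAt hmem
  have hψd : DifferentiableAt ℝ ψ p := hψp.differentiableAt (by simp)
  have hNd : DifferentiableAt ℝ N p := hNp.differentiableAt (by simp)
  have evψψ : ∀ᶠ q in nhds p, ⟪ψ q, ψ q⟫ = 1 :=
    Filter.eventually_of_mem hmem fun q hq => by
      rw [real_inner_self_eq_norm_mul_norm, hψnorm q hq]; norm_num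
  have evNN : ∀ᶠ q in nhds p, ⟪N q, N q⟫ = 1 :=
    Filter.eventually_of_mem hmem fun q hq => by
      rw [real_inner_self_eq_norm_mul_norm, hNnorm q hq]; norm_num
  have evNψ : ∀ᶠ q in nhds p, ⟪N q, ψ q⟫ = 0 :=
    Filter.eventually_of_mem hmem fun q hq => hNψ q hq
  have evNψx : ∀ᶠ q in nhds p, ⟪N q, pdx ψ q⟫ = 0 :=
    Filter.eventually_of_mem hmem fun q hq => hNψx q hq
  have evNψy : ∀ᶠ q in nhds p, ⟪N q, pdy ψ q⟫ = 0 :=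
    Filter.eventually_of_mem hmem fun q hq => hNψy q hq
  have huu : ⟪ψ p, ψ p⟫ = 1 := by
    rw [real_inner_self_eq_norm_mul_norm, hψnorm p hp]; norm_num
  have hnn : ⟪N p, N p⟫ = 1 := by
    rw [real_inner_self_eq_norm_mul_norm, hNnorm p hp]; norm_num
  have hAu : ⟪pdx ψ p, ψ p⟫ = 0 := by
    have h : ⟪pdx ψ p, ψ p⟫ + ⟪ψ p, pdx ψ p⟫ = 0 := inner_fderiv_zero hψd hψd evψψ (1, 0)
    have h2 := real_inner_comm (ψ p) (pdx ψ p)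
    linarith
  have hBu : ⟪pdy ψ p, ψ p⟫ = 0 := by
    have h : ⟪pdy ψ p, ψ p⟫ + ⟪ψ p, pdy ψ p⟫ = 0 := inner_fderiv_zero hψd hψd evψψ (0, 1)
    have h2 := real_inner_comm (ψ p) (pdy ψ p)
    linarith
  have hMn : ⟪pdx N p, N p⟫ = 0 := by
    have h : ⟪pdx N p, N p⟫ + ⟪N p, pdx N p⟫ = 0 := inner_fderiv_zero hNd hNd evNN (1, 0)
    have h2 := real_inner_comm (N p) (pdx N p)
    linarith
  have hVn : ⟪pdy N p, N p⟫ = 0 := by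
    have h : ⟪pdy N p, N p⟫ + ⟪N p, pdy N p⟫ = 0 := inner_fderiv_zero hNd hNd evNN (0, 1)
    have h2 := real_inner_comm (N p) (pdy N p)
    linarith
  have hMu : ⟪pdx N p, ψ p⟫ = 0 := by
    have h : ⟪pdx N p, ψ p⟫ + ⟪N p, pdx ψ p⟫ = 0 := inner_fderiv_zero hNd hψd evNψ (1, 0)
    have h2 : ⟪N p, pdx ψ p⟫ = 0 := hNψx p hp
    linarith
  have hVu : ⟪pdy N p, ψ p⟫ = 0 := by
    have h : ⟪pdy N p, ψ p⟫ + ⟪N p, pdy ψ p⟫ = 0 := inner_fderiv_zero hNd hψd evNψ (0, 1)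
    have h2 : ⟪N p, pdy ψ p⟫ = 0 := hNψy p hp
    linarith
  have hMB : ⟪pdx N p, pdy ψ p⟫ = 0 := by
    have h := hf p hp; linarith
  have hVA : ⟪pdy N p, pdx ψ p⟫ = 0 := by
    have h1 : ⟪pdy N p, pdx ψ p⟫ + ⟪N p, fderiv ℝ (fun q => pdx ψ q) p (0, 1)⟫ = 0 :=
      inner_fderiv_zero hNd (diff_pdx hψp) evNψx (0, 1)
    have h2 : ⟪pdx N p, pdy ψ p⟫ + ⟪N p, fderiv ℝ (fun q => pdy ψ q) p (1, 0)⟫ = 0 :=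
      inner_fderiv_zero hNd (diff_pdy hψp) evNψy (1, 0)
    have h3 := clairaut hψp
    rw [h3] at h1
    linarith
  have hVB : ⟪pdy N p, pdy ψ p⟫ = ⟪pdx N p, pdx ψ p⟫ := by
    have h := heg p hp; linarith
  exact main_alg_s2 (ψ p) (N p) (pdx ψ p) (pdy ψ p) (pdx N p) (pdy N p) (K p)
    huu hnn (hNψ p hp) hAu hBu (hNψx p hp) (hNψy p hp) (himm p hp) (horient p hp)
    hMu hMn hMB hVu hVn hVA hVB (hepos p hp) (hK p hp)
end
end

section
/- There exist an open connected set U ⊆ ℝ² with coordinates (u,v), a smooth immersion ψ : U → ℍ with ‖ψ‖ ≡ 1, and a smooth map N : U → ℍ with ‖N‖ ≡ 1 and ⟨N,ψ⟩ = ⟨N,ψᵤ⟩ = ⟨N,ψᵥ⟩ = 0, such that the second fundamental form coefficients satisfy e = −⟨Nᵤ,ψᵤ⟩ ≡ 0, g₂ = −⟨Nᵥ,ψᵥ⟩ ≡ 0 and f = −⟨Nᵤ,ψᵥ⟩ > 0, and the extrinsic curvature K = −f²/(EG − F²) is identically equal to −2. In other words, there is a surface isometrically immersed in 𝕊³ with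 constant negative extrinsic curvature K = −2. -/
noncomputable section

open scoped RealInnerProductSpace Quaternion
open Complex

/-! ### Auxiliary constructions for the proof -/

def pkq (a b c d : ℝ) : ℍ[ℝ] := ⟨a,b,c,d⟩

lemma pk_inner_mk (a b c d a' b' c' d' : ℝ) :
    ⟪pkq a b c d, pkq a' b' c' d'⟫ = a*a' + b*b' + c*c' + d*d' := by
  rw [Quaternion.inner_def]
  simp [Quaternion.re_mul]
  simp [pkq]

lemma pk_sum_mk (a b c d : ℝ) :
    a • pkq 1 0 0 0 + b • pkq 0 1 0 0 + c • pkq 0 0 1 0 + d • pkq 0 0 0 1 = pkq a b c d := by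
  ext <;> simp [Quaternion.re_smul] <;> simp [pkq]

lemma pk_norm_one (x : ℍ[ℝ]) (h : ⟪x, x⟫ = 1) : ‖x‖ = 1 := by
  have h2 : ⟪x, x⟫ = ‖x‖ ^ 2 := real_inner_self_eq_norm_sq x
  have := norm_nonneg x
  nlinarith [h2 ▸ h]

lemma pk_tanh_deriv (w : ℝ) : HasDerivAt Real.tanh (((Real.cosh w)⁻¹)^2) w := by
  have h : Real.tanh = fun x => Real.sinh x / Real.cosh x :=
    funext fun x => Real.tanh_eq_sinh_div_cosh x
  rw [h]
  have := (Real.hasDerivAt_sinh w).div (Real.hasDerivAt_cosh w) (Real.cosh_pos w).ne'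
  refine this.congr_deriv (Eq.symm ?_)
  have h2 := Real.cosh_sq_sub_sinh_sq w
  rw [show Real.cosh w * Real.cosh w - Real.sinh w * Real.sinh w = 1 by nlinarith [h2], inv_pow]
  exact (one_div _).symm

lemma pk_sech_deriv (w : ℝ) :
    HasDerivAt (fun x => (Real.cosh x)⁻¹) (-(Real.tanh w * (Real.cosh w)⁻¹)) w := by
  have h1 := (Real.hasDerivAt_cosh w).inv (Real.cosh_pos w).ne'
  have h2 : -(Real.tanh w * (Real.cosh w)⁻¹) = -Real.sinh w / Real.cosh w ^ 2 := by
    rw [Real.tanh_eq_sinh_div_cosh]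
    field_simp
  rw [h2]; exact h1

lemma pk_R1 (w : ℝ) : Real.tanh w ^ 2 + ((Real.cosh w)⁻¹) ^ 2 = 1 := by
  have h2 := Real.cosh_sq_sub_sinh_sq w
  have hc := (Real.cosh_pos w).ne'
  rw [Real.tanh_eq_sinh_div_cosh]
  field_simp
  linarith

def pkc : ℝ := (Real.sqrt 2)⁻¹

lemma pk_R4 : pkc ^ 2 = 1/2 := by
  rw [pkc, inv_pow, Real.sq_sqrt (by norm_num : (0:ℝ) ≤ 2)]
  norm_num

lemma pkc_pos : 0 < pkc := by
  rw [pkc]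
  positivity

def Wf : ℝ × ℝ → ℝ := fun p => pkc * (p.1 + p.2)
def Tf : ℝ × ℝ → ℝ := fun p => p.1 - p.2

def Lw : ℝ × ℝ →L[ℝ] ℝ := pkc • (ContinuousLinearMap.fst ℝ ℝ ℝ + ContinuousLinearMap.snd ℝ ℝ ℝ)
def Lt : ℝ × ℝ →L[ℝ] ℝ := ContinuousLinearMap.fst ℝ ℝ ℝ - ContinuousLinearMap.snd ℝ ℝ ℝ

lemma pk_hasW (p : ℝ × ℝ) : HasFDerivAt Wf Lw p := by
  have := (hasFDerivAt_fst (𝕜 := ℝ) (p := p)).add (hasFDerivAt_snd (𝕜 := ℝ) (p := p))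
  exact this.const_mul pkc

lemma pk_hasT (p : ℝ × ℝ) : HasFDerivAt Tf Lt p :=
  (hasFDerivAt_fst (𝕜 := ℝ) (p := p)).sub (hasFDerivAt_snd (𝕜 := ℝ) (p := p))

/-- master surface builder -/
def surf (G1 G2 G3 : ℝ → ℝ) : ℝ × ℝ → ℍ[ℝ] := fun p =>
  G1 (Wf p) • pkq 1 0 0 0 + G2 (Wf p) • pkq 0 1 0 0
    + (G3 (Wf p) * Real.cos (Tf p)) • pkq 0 0 1 0
    + (G3 (Wf p) * Real.sin (Tf p)) • pkq 0 0 0 1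

lemma surf_apply (G1 G2 G3 : ℝ → ℝ) (p : ℝ × ℝ) :
    surf G1 G2 G3 p = pkq (G1 (Wf p)) (G2 (Wf p)) (G3 (Wf p) * Real.cos (Tf p))
      (G3 (Wf p) * Real.sin (Tf p)) := by
  simp only [surf]
  exact pk_sum_mk _ _ _ _

lemma surf_deriv {G1 G2 G3 : ℝ → ℝ} {g1 g2 g3 : ℝ} (p : ℝ × ℝ)
    (h1 : HasDerivAt G1 g1 (Wf p)) (h2 : HasDerivAt G2 g2 (Wf p))
    (h3 : HasDerivAt G3 g3 (Wf p)) :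
    ∃ L : ℝ × ℝ →L[ℝ] ℍ[ℝ], HasFDerivAt (surf G1 G2 G3) L p ∧
      L (1, 0) = pkq (pkc * g1) (pkc * g2)
        (pkc * g3 * Real.cos (Tf p) - G3 (Wf p) * Real.sin (Tf p))
        (pkc * g3 * Real.sin (Tf p) + G3 (Wf p) * Real.cos (Tf p)) ∧
      L (0, 1) = pkq (pkc * g1) (pkc * g2)
        (pkc * g3 * Real.cos (Tf p) + G3 (Wf p) * Real.sin (Tf p))
        (pkc * g3 * Real.sin (Tf p) - G3 (Wf p) * Real.cos (Tf p)) := by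
  have hw := pk_hasW p
  have ht := pk_hasT p
  have d1 := h1.comp_hasFDerivAt p hw
  simp only [Function.comp_def] at d1
  have d2 := h2.comp_hasFDerivAt p hw
  simp only [Function.comp_def] at d2
  have d3w := h3.comp_hasFDerivAt p hw
  simp only [Function.comp_def] at d3w
  have dcos := (Real.hasDerivAt_cos (Tf p)).comp_hasFDerivAt p ht
  simp only [Function.comp_def] at dcos
  have dsin := (Real.hasDerivAt_sin (Tf p)).comp_hasFDerivAt p ht
  simp only [Function.comp_def] at dsin
  have d3 := d3w.mul dcos
  have d4 := d3w.mul dsin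
  refine ⟨_, (((d1.smul_const (pkq 1 0 0 0)).add (d2.smul_const (pkq 0 1 0 0))).add
      (d3.smul_const (pkq 0 0 1 0))).add (d4.smul_const (pkq 0 0 0 1)), ?_, ?_⟩ <;>
  · simp [Lw, Lt, ContinuousLinearMap.smulRight_apply]
    rw [pk_sum_mk]
    ext <;> first | rfl | ring

/-! component functions -/

def pkA : ℝ → ℝ := fun w => pkc * (Real.cos w + Real.tanh w * Real.sin w)
def pkB : ℝ → ℝ := fun w => pkc * (Real.sin w - Real.tanh w * Real.cos w)
def pkC : ℝ → ℝ := fun w => pkc * (Real.cosh w)⁻¹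
def pkAN : ℝ → ℝ := fun w => -((Real.cosh w)⁻¹ * Real.sin w)
def pkBN : ℝ → ℝ := fun w => (Real.cosh w)⁻¹ * Real.cos w
def pkCN : ℝ → ℝ := Real.tanh

def pkA' : ℝ → ℝ := fun w => pkc * (Real.tanh w * (Real.cos w - Real.tanh w * Real.sin w))
def pkB' : ℝ → ℝ := fun w => pkc * (Real.tanh w * (Real.tanh w * Real.cos w + Real.sin w))
def pkC' : ℝ → ℝ := fun w => -(pkc * (Real.tanh w * (Real.cosh w)⁻¹))
def pkAN' : ℝ → ℝ := fun w => -((Real.cosh w)⁻¹ * (Real.cos w - Real.tanh w * Real.sin w))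
def pkBN' : ℝ → ℝ := fun w => -((Real.cosh w)⁻¹ * (Real.tanh w * Real.cos w + Real.sin w))
def pkCN' : ℝ → ℝ := fun w => ((Real.cosh w)⁻¹)^2

lemma pkA_deriv (w : ℝ) : HasDerivAt pkA (pkA' w) w := by
  have h := ((Real.hasDerivAt_cos w).add ((pk_tanh_deriv w).mul (Real.hasDerivAt_sin w))).const_mul pkc
  have hR1 := pk_R1 w
  refine h.congr_deriv (Eq.symm ?_)
  simp only [pkA']
  linear_combination (-(pkc * Real.sin w)) * hR1

lemma pkB_deriv (w : ℝ) : HasDerivAt pkB (pkB' w) w := by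
  have h := ((Real.hasDerivAt_sin w).sub ((pk_tanh_deriv w).mul (Real.hasDerivAt_cos w))).const_mul pkc
  have hR1 := pk_R1 w
  refine h.congr_deriv (Eq.symm ?_)
  simp only [pkB']
  linear_combination (pkc * Real.cos w) * hR1

lemma pkC_deriv (w : ℝ) : HasDerivAt pkC (pkC' w) w := by
  have h := (pk_sech_deriv w).const_mul pkc
  refine h.congr_deriv (Eq.symm ?_)
  simp only [pkC']
  ring

lemma pkAN_deriv (w : ℝ) : HasDerivAt pkAN (pkAN' w) w := by
  have h := ((pk_sech_deriv w).mul (Real.hasDerivAt_sin w)).neg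
  refine h.congr_deriv (Eq.symm ?_)
  simp only [pkAN']
  ring

lemma pkBN_deriv (w : ℝ) : HasDerivAt pkBN (pkBN' w) w := by
  have h := (pk_sech_deriv w).mul (Real.hasDerivAt_cos w)
  refine h.congr_deriv (Eq.symm ?_)
  simp only [pkBN']
  ring

lemma pkCN_deriv (w : ℝ) : HasDerivAt pkCN (pkCN' w) w := pk_tanh_deriv w

/-! the surface and its normal -/

def pkPsi : ℝ × ℝ → ℍ[ℝ] := surf pkA pkB pkC
def pkN : ℝ × ℝ → ℍ[ℝ] := surf pkAN pkBN pkCN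

lemma pk_psi_pd (p : ℝ × ℝ) :
    pdx pkPsi p = pkq (pkc * pkA' (Wf p)) (pkc * pkB' (Wf p))
      (pkc * pkC' (Wf p) * Real.cos (Tf p) - pkC (Wf p) * Real.sin (Tf p))
      (pkc * pkC' (Wf p) * Real.sin (Tf p) + pkC (Wf p) * Real.cos (Tf p)) ∧
    pdy pkPsi p = pkq (pkc * pkA' (Wf p)) (pkc * pkB' (Wf p))
      (pkc * pkC' (Wf p) * Real.cos (Tf p) + pkC (Wf p) * Real.sin (Tf p))
      (pkc * pkC' (Wf p) * Real.sin (Tf p) - pkC (Wf p) * Real.cos (Tf p)) := by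
  obtain ⟨L, hL, h10, h01⟩ := surf_deriv p (pkA_deriv (Wf p)) (pkB_deriv (Wf p)) (pkC_deriv (Wf p))
  constructor
  · simp only [pdx, pkPsi, hL.fderiv]; exact h10
  · simp only [pdy, pkPsi, hL.fderiv]; exact h01

lemma pk_N_pd (p : ℝ × ℝ) :
    pdx pkN p = pkq (pkc * pkAN' (Wf p)) (pkc * pkBN' (Wf p))
      (pkc * pkCN' (Wf p) * Real.cos (Tf p) - pkCN (Wf p) * Real.sin (Tf p))
      (pkc * pkCN' (Wf p) * Real.sin (Tf p) + pkCN (Wf p) * Real.cos (Tf p)) ∧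
    pdy pkN p = pkq (pkc * pkAN' (Wf p)) (pkc * pkBN' (Wf p))
      (pkc * pkCN' (Wf p) * Real.cos (Tf p) + pkCN (Wf p) * Real.sin (Tf p))
      (pkc * pkCN' (Wf p) * Real.sin (Tf p) - pkCN (Wf p) * Real.cos (Tf p)) := by
  obtain ⟨L, hL, h10, h01⟩ := surf_deriv p (pkAN_deriv (Wf p)) (pkBN_deriv (Wf p)) (pkCN_deriv (Wf p))
  constructor
  · simp only [pdx, pkN, hL.fderiv]; exact h10
  · simp only [pdy, pkN, hL.fderiv]; exact h01

/-! smoothness -/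

lemma pk_tanh_contDiff : ContDiff ℝ (⊤ : ℕ∞) Real.tanh := by
  have h : Real.tanh = fun x => Real.sinh x / Real.cosh x :=
    funext fun x => Real.tanh_eq_sinh_div_cosh x
  rw [h]
  exact Real.contDiff_sinh.div Real.contDiff_cosh fun x => (Real.cosh_pos x).ne'

lemma pk_sech_contDiff : ContDiff ℝ (⊤ : ℕ∞) (fun w : ℝ => (Real.cosh w)⁻¹) :=
  Real.contDiff_cosh.inv fun x => (Real.cosh_pos x).ne'

lemma pk_Wf_contDiff : ContDiff ℝ (⊤ : ℕ∞) Wf :=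
  contDiff_const.mul (contDiff_fst.add contDiff_snd)

lemma pk_Tf_contDiff : ContDiff ℝ (⊤ : ℕ∞) Tf :=
  contDiff_fst.sub contDiff_snd

lemma pk_surf_contDiff {G1 G2 G3 : ℝ → ℝ} (h1 : ContDiff ℝ (⊤ : ℕ∞) G1) (h2 : ContDiff ℝ (⊤ : ℕ∞) G2)
    (h3 : ContDiff ℝ (⊤ : ℕ∞) G3) : ContDiff ℝ (⊤ : ℕ∞) (surf G1 G2 G3) := by
  unfold surf
  exact ((((h1.comp pk_Wf_contDiff).smul contDiff_const).add
    ((h2.comp pk_Wf_contDiff).smul contDiff_const)).add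
    (((h3.comp pk_Wf_contDiff).mul (Real.contDiff_cos.comp pk_Tf_contDiff)).smul contDiff_const)).add
    (((h3.comp pk_Wf_contDiff).mul (Real.contDiff_sin.comp pk_Tf_contDiff)).smul contDiff_const)

lemma pk_psi_contDiff : ContDiff ℝ (⊤ : ℕ∞) pkPsi :=
  pk_surf_contDiff
    (contDiff_const.mul (Real.contDiff_cos.add (pk_tanh_contDiff.mul Real.contDiff_sin)))
    (contDiff_const.mul (Real.contDiff_sin.sub (pk_tanh_contDiff.mul Real.contDiff_cos)))
    (contDiff_const.mul pk_sech_contDiff)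

lemma pk_N_contDiff : ContDiff ℝ (⊤ : ℕ∞) pkN :=
  pk_surf_contDiff
    ((pk_sech_contDiff.mul Real.contDiff_sin).neg)
    (pk_sech_contDiff.mul Real.contDiff_cos)
    pk_tanh_contDiff

theorem stmt16 :
    ∃ (U : Set (ℝ × ℝ)) (ψ N : ℝ × ℝ → ℍ[ℝ]),
      IsOpen U ∧ IsConnected U ∧
      ContDiffOn ℝ (⊤ : ℕ∞) ψ U ∧ ContDiffOn ℝ (⊤ : ℕ∞) N U ∧
      (∀ p ∈ U, ‖ψ p‖ = 1) ∧
      (∀ p ∈ U, LinearIndependent ℝ ![pdx ψ p, pdy ψ p]) ∧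
      (∀ p ∈ U, ‖N p‖ = 1) ∧
      (∀ p ∈ U, ⟪N p, ψ p⟫ = 0) ∧
      (∀ p ∈ U, ⟪N p, pdx ψ p⟫ = 0) ∧
      (∀ p ∈ U, ⟪N p, pdy ψ p⟫ = 0) ∧
      -- (u,v) are proper null coordinates: e ≡ 0, g₂ ≡ 0, f > 0
      (∀ p ∈ U, -⟪pdx N p, pdx ψ p⟫ = 0) ∧
      (∀ p ∈ U, -⟪pdy N p, pdy ψ p⟫ = 0) ∧
      (∀ p ∈ U, 0 < -⟪pdx N p, pdy ψ p⟫) ∧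
      -- the extrinsic curvature K = -f²/(EG - F²) is identically -2
      (∀ p ∈ U, -(-⟪pdx N p, pdy ψ p⟫) ^ 2 /
        (⟪pdx ψ p, pdx ψ p⟫ * ⟪pdy ψ p, pdy ψ p⟫ - ⟪pdx ψ p, pdy ψ p⟫ ^ 2) = -2) := by
  refine ⟨{p : ℝ × ℝ | 0 < p.1 + p.2}, pkPsi, pkN, ?_, ?_, ?_, ?_, ?_, ?_, ?_, ?_, ?_, ?_, ?_, ?_, ?_, ?_⟩
  · exact isOpen_lt continuous_const (continuous_fst.add continuous_snd)
  · refine Convex.isConnected ?_ ⟨(1,1), by norm_num⟩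
    intro x hx y hy a b ha hb hab
    simp only [Set.mem_setOf_eq] at *
    simp only [Prod.fst_add, Prod.snd_add, Prod.smul_fst, Prod.smul_snd, smul_eq_mul]
    rcases eq_or_lt_of_le ha with h|h
    · have hb1 : b = 1 := by linarith
      subst hb1
      rw [← h]
      nlinarith
    · nlinarith [mul_pos h hx, mul_nonneg hb hy.le]
  · exact pk_psi_contDiff.contDiffOn
  · exact pk_N_contDiff.contDiffOn
  -- ‖ψ‖ = 1
  · intro p _
    apply pk_norm_one
    rw [show pkPsi p = _ from surf_apply pkA pkB pkC p, pk_inner_mk]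
    have hR1 := pk_R1 (Wf p)
    have hR2 := Real.sin_sq_add_cos_sq (Wf p)
    have hR3 := Real.sin_sq_add_cos_sq (Tf p)
    have hR4 := pk_R4
    simp only [pkA, pkB, pkC]
    linear_combination ((pkc)^2 * (Real.cos (Wf p))^2 + (pkc)^2 * (Real.sin (Wf p))^2) * hR1 + ((2 : ℝ) * (pkc)^2 + (-1 : ℝ) * (pkc)^2 * ((Real.cosh (Wf p))⁻¹)^2) * hR2 + ((pkc)^2 * ((Real.cosh (Wf p))⁻¹)^2) * hR3 + ((2 : ℝ)) * hR4
  -- linear independence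
  · intro p hp
    have hp' : 0 < p.1 + p.2 := hp
    have hw : 0 < Wf p := mul_pos pkc_pos hp'
    have hT : 0 < Real.tanh (Wf p) := by
      rw [Real.tanh_eq_sinh_div_cosh]
      exact div_pos (Real.sinh_pos_iff.mpr hw) (Real.cosh_pos _)
    have hS : 0 < (Real.cosh (Wf p))⁻¹ := by positivity
    obtain ⟨hX, hY⟩ := pk_psi_pd p
    have hR1 := pk_R1 (Wf p)
    have hR2 := Real.sin_sq_add_cos_sq (Wf p)
    have hR3 := Real.sin_sq_add_cos_sq (Tf p)
    have hR4 := pk_R4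
    have hE : ⟪pdx pkPsi p, pdx pkPsi p⟫ = 1/2 := by
      rw [hX, pk_inner_mk]
      simp only [pkA', pkB', pkC', pkC]
      linear_combination ((2 : ℝ) * (pkc)^4 * (Real.cos (Wf p))^2 + (2 : ℝ) * (pkc)^4 * (Real.sin (Wf p))^2 + (pkc)^4 * ((Real.cosh (Wf p))⁻¹)^2 * (Real.cos (Tf p))^2 + (pkc)^4 * ((Real.cosh (Wf p))⁻¹)^2 * (Real.sin (Tf p))^2 + (-1 : ℝ) * (pkc)^4 * ((Real.cosh (Wf p))⁻¹)^2 * (Real.cos (Wf p))^2 + (-1 : ℝ) * (pkc)^4 * ((Real.cosh (Wf p))⁻¹)^2 * (Real.sin (Wf p))^2 + (pkc)^4 * (Real.tanh (Wf p))^2 * (Real.cos (Wf p))^2 + (pkc)^4 * (Real.tanh (Wf p))^2 * (Real.sin (Wf p))^2) * hR1 + ((2 : ℝ) * (pkc)^4 + (-3 : ℝ) * (pkc)^4 * ((Real.cosh (Wf p))⁻¹)^2 + (pkc)^4 * ((Real.cosh (Wf p))⁻¹)^4) * hR2 + ((pkc)^2 * ((Real.cosh (Wf p))⁻¹)^2 +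 (pkc)^4 * ((Real.cosh (Wf p))⁻¹)^2 + (-1 : ℝ) * (pkc)^4 * ((Real.cosh (Wf p))⁻¹)^4) * hR3 + ((1 : ℝ) + (2 : ℝ) * (pkc)^2 + (-2 : ℝ) * (pkc)^2 * ((Real.cosh (Wf p))⁻¹)^2) * hR4
    have hG2 : ⟪pdy pkPsi p, pdy pkPsi p⟫ = 1/2 := by
      rw [hY, pk_inner_mk]
      simp only [pkA', pkB', pkC', pkC]
      linear_combination ((2 : ℝ) * (pkc)^4 * (Real.cos (Wf p))^2 + (2 : ℝ) * (pkc)^4 * (Real.sin (Wf p))^2 + (pkc)^4 * ((Real.cosh (Wf p))⁻¹)^2 * (Real.cos (Tf p))^2 + (pkc)^4 * ((Real.cosh (Wf p))⁻¹)^2 * (Real.sin (Tf p))^2 + (-1 : ℝ) * (pkc)^4 * ((Real.cosh (Wf p))⁻¹)^2 * (Real.cos (Wf p))^2 + (-1 : ℝ) * (pkc)^4 * ((Real.cosh (Wf p))⁻¹)^2 * (Real.sin (Wf p))^2 + (pkc)^4 * (Real.tanh (Wf p))^2 * (Real.cos (Wf p))^2 + (pkc)^4 * (Real.tanh (Wf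 p))^2 * (Real.sin (Wf p))^2) * hR1 + ((2 : ℝ) * (pkc)^4 + (-3 : ℝ) * (pkc)^4 * ((Real.cosh (Wf p))⁻¹)^2 + (pkc)^4 * ((Real.cosh (Wf p))⁻¹)^4) * hR2 + ((pkc)^2 * ((Real.cosh (Wf p))⁻¹)^2 + (pkc)^4 * ((Real.cosh (Wf p))⁻¹)^2 + (-1 : ℝ) * (pkc)^4 * ((Real.cosh (Wf p))⁻¹)^4) * hR3 + ((1 : ℝ) + (2 : ℝ) * (pkc)^2 + (-2 : ℝ) * (pkc)^2 * ((Real.cosh (Wf p))⁻¹)^2) * hR4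
    have hF1 : ⟪pdx pkPsi p, pdy pkPsi p⟫
        = (Real.tanh (Wf p)^2 - ((Real.cosh (Wf p))⁻¹)^2)/2 := by
      rw [hX, hY, pk_inner_mk]
      simp only [pkA', pkB', pkC', pkC]
      linear_combination ((-1/2 : ℝ) + (2 : ℝ) * (pkc)^4 * (Real.cos (Wf p))^2 + (2 : ℝ) * (pkc)^4 * (Real.sin (Wf p))^2 + (pkc)^4 * ((Real.cosh (Wf p))⁻¹)^2 * (Real.cos (Tf p))^2 + (pkc)^4 * ((Real.cosh (Wf p))⁻¹)^2 * (Real.sin (Tf p))^2 + (-1 : ℝ) * (pkc)^4 * ((Real.cosh (Wf p))⁻¹)^2 * (Real.cos (Wf p))^2 + (-1 : ℝ) * (pkc)^4 * ((Real.cosh (Wf p))⁻¹)^2 * (Real.sin (Wf p))^2 + (pkc)^4 * (Real.tanh (Wf p))^2 * (Real.cos (Wf p))^2 + (pkc)^4 * (Real.tanh (Wf p))^2 * (Real.sin (Wf p))^2) * hR1 + ((2 : ℝ) * (pkc)^4 + (-3 : ℝ) * (pkc)^4 * ((Real.cosh (Wf p))⁻¹)^2 + (pkc)^4 * ((Real.cosh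 (Wf p))⁻¹)^4) * hR2 + ((-1 : ℝ) * (pkc)^2 * ((Real.cosh (Wf p))⁻¹)^2 + (pkc)^4 * ((Real.cosh (Wf p))⁻¹)^2 + (-1 : ℝ) * (pkc)^4 * ((Real.cosh (Wf p))⁻¹)^4) * hR3 + ((1 : ℝ) + (-2 : ℝ) * ((Real.cosh (Wf p))⁻¹)^2 + (2 : ℝ) * (pkc)^2 + (-2 : ℝ) * (pkc)^2 * ((Real.cosh (Wf p))⁻¹)^2) * hR4
    have hF2 : ⟪pdy pkPsi p, pdx pkPsi p⟫
        = (Real.tanh (Wf p)^2 - ((Real.cosh (Wf p))⁻¹)^2)/2 := by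
      rw [real_inner_comm]
      exact hF1
    rw [LinearIndependent.pair_iff]
    intro s t hst
    have e1 := congrArg (fun z : ℍ[ℝ] => ⟪z, pdx pkPsi p⟫) hst
    have e2 := congrArg (fun z : ℍ[ℝ] => ⟪z, pdy pkPsi p⟫) hst
    simp only [inner_add_left, real_inner_smul_left, inner_zero_left] at e1 e2
    rw [hE, hF2] at e1
    rw [hF1, hG2] at e2
    have hs : s * (Real.tanh (Wf p) * (Real.cosh (Wf p))⁻¹)^2 = 0 := by
      linear_combination (1/2) * e1 - ((Real.tanh (Wf p)^2 - ((Real.cosh (Wf p))⁻¹)^2)/2) * e2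
        + (s * (1/4) * (1 + ((Real.cosh (Wf p))⁻¹)^2 + Real.tanh (Wf p)^2)) * hR1
    have hTS : (Real.tanh (Wf p) * (Real.cosh (Wf p))⁻¹)^2 ≠ 0 :=
      pow_ne_zero _ (mul_ne_zero hT.ne' hS.ne')
    have hs0 : s = 0 := by
      rcases mul_eq_zero.mp hs with h | h
      · exact h
      · exact absurd h hTS
    refine ⟨hs0, ?_⟩
    rw [hs0] at e2
    have hTS2 : (0:ℝ) < Real.tanh (Wf p)^2 + ((Real.cosh (Wf p))⁻¹)^2 := by positivity
    linarith [e2]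
  -- ‖N‖ = 1
  · intro p _
    apply pk_norm_one
    rw [show pkN p = _ from surf_apply pkAN pkBN pkCN p, pk_inner_mk]
    have hR1 := pk_R1 (Wf p)
    have hR2 := Real.sin_sq_add_cos_sq (Wf p)
    have hR3 := Real.sin_sq_add_cos_sq (Tf p)
    simp only [pkAN, pkBN, pkCN]
    linear_combination ((Real.cos (Tf p))^2 + (Real.sin (Tf p))^2) * hR1 + (((Real.cosh (Wf p))⁻¹)^2) * hR2 + ((1 : ℝ) + (-1 : ℝ) * ((Real.cosh (Wf p))⁻¹)^2) * hR3
  -- ⟪N, ψ⟫ = 0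
  · intro p _
    rw [show pkN p = _ from surf_apply pkAN pkBN pkCN p,
      show pkPsi p = _ from surf_apply pkA pkB pkC p, pk_inner_mk]
    have hR2 := Real.sin_sq_add_cos_sq (Wf p)
    have hR3 := Real.sin_sq_add_cos_sq (Tf p)
    simp only [pkAN, pkBN, pkCN, pkA, pkB, pkC]
    linear_combination ((-1 : ℝ) * (pkc) * (Real.tanh (Wf p)) * ((Real.cosh (Wf p))⁻¹)) * hR2 + ((pkc) * (Real.tanh (Wf p)) * ((Real.cosh (Wf p))⁻¹)) * hR3
  -- ⟪N, pdx ψ⟫ = 0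
  · intro p _
    obtain ⟨hX, _⟩ := pk_psi_pd p
    rw [show pkN p = _ from surf_apply pkAN pkBN pkCN p, hX, pk_inner_mk]
    have hR1 := pk_R1 (Wf p)
    have hR2 := Real.sin_sq_add_cos_sq (Wf p)
    have hR3 := Real.sin_sq_add_cos_sq (Tf p)
    simp only [pkAN, pkBN, pkCN, pkA', pkB', pkC', pkC]
    linear_combination ((-1 : ℝ) * (pkc)^2 * ((Real.cosh (Wf p))⁻¹) * (Real.cos (Tf p))^2 + (-1 : ℝ) * (pkc)^2 * ((Real.cosh (Wf p))⁻¹) * (Real.sin (Tf p))^2 + (pkc)^2 * ((Real.cosh (Wf p))⁻¹) * (Real.cos (Wf p))^2 + (pkc)^2 * ((Real.cosh (Wf p))⁻¹) * (Real.sin (Wf p))^2) * hR1 + ((pkc)^2 * ((Real.cosh (Wf p))⁻¹) + (-1 : ℝ) * (pkc)^2 * ((Real.cosh (Wf p))⁻¹)^3) * hR2 + ((-1 : ℝ) * (pkc)^2 * ((Real.cosh (Wf p))⁻¹) + (pkc)^2 * ((Real.cosh (Wf p))⁻¹)^3) * hR3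
  -- ⟪N, pdy ψ⟫ = 0
  · intro p _
    obtain ⟨_, hY⟩ := pk_psi_pd p
    rw [show pkN p = _ from surf_apply pkAN pkBN pkCN p, hY, pk_inner_mk]
    have hR1 := pk_R1 (Wf p)
    have hR2 := Real.sin_sq_add_cos_sq (Wf p)
    have hR3 := Real.sin_sq_add_cos_sq (Tf p)
    simp only [pkAN, pkBN, pkCN, pkA', pkB', pkC', pkC]
    linear_combination ((-1 : ℝ) * (pkc)^2 * ((Real.cosh (Wf p))⁻¹) * (Real.cos (Tf p))^2 + (-1 : ℝ) * (pkc)^2 * ((Real.cosh (Wf p))⁻¹) * (Real.sin (Tf p))^2 + (pkc)^2 * ((Real.cosh (Wf p))⁻¹) * (Real.cos (Wf p))^2 + (pkc)^2 * ((Real.cosh (Wf p))⁻¹) * (Real.sin (Wf p))^2) * hR1 + ((pkc)^2 * ((Real.cosh (Wf p))⁻¹) + (-1 : ℝ) * (pkc)^2 * ((Real.cosh (Wf p))⁻¹)^3) * hR2 + ((-1 : ℝ) * (pkc)^2 * ((Real.cosh (Wf p))⁻¹) + (pkc)^2 * ((Real.cosh (Wf p))⁻¹)^3) * hR3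
  -- e = 0
  · intro p _
    rw [neg_eq_zero]
    obtain ⟨hX, _⟩ := pk_psi_pd p
    obtain ⟨hXN, _⟩ := pk_N_pd p
    rw [hXN, hX, pk_inner_mk]
    have hR1 := pk_R1 (Wf p)
    have hR2 := Real.sin_sq_add_cos_sq (Wf p)
    have hR3 := Real.sin_sq_add_cos_sq (Tf p)
    have hR4 := pk_R4
    simp only [pkAN', pkBN', pkCN', pkCN, pkA', pkB', pkC', pkC]
    linear_combination ((-1 : ℝ) * (pkc)^3 * (Real.tanh (Wf p)) * ((Real.cosh (Wf p))⁻¹) * (Real.cos (Wf p))^2 + (-1 : ℝ) * (pkc)^3 * (Real.tanh (Wf p)) * ((Real.cosh (Wf p))⁻¹) * (Real.sin (Wf p))^2) * hR1 + ((-2 : ℝ) * (pkc)^3 * (Real.tanh (Wf p)) * ((Real.cosh (Wf p))⁻¹) + (pkc)^3 * (Real.tanh (Wf p)) * ((Real.cosh (Wf p))⁻¹)^3) * hR2 + ((pkc) * (Real.tanh (Wf p)) * ((Real.cosh (Wf p))⁻¹) + (-1 : ℝ) * (pkc)^3 * (Real.tanh (Wf p)) * ((Real.cosh (Wf p))⁻¹)^3)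 * hR3 + ((-2 : ℝ) * (pkc) * (Real.tanh (Wf p)) * ((Real.cosh (Wf p))⁻¹)) * hR4
  -- g₂ = 0
  · intro p _
    rw [neg_eq_zero]
    obtain ⟨_, hY⟩ := pk_psi_pd p
    obtain ⟨_, hYN⟩ := pk_N_pd p
    rw [hYN, hY, pk_inner_mk]
    have hR1 := pk_R1 (Wf p)
    have hR2 := Real.sin_sq_add_cos_sq (Wf p)
    have hR3 := Real.sin_sq_add_cos_sq (Tf p)
    have hR4 := pk_R4
    simp only [pkAN', pkBN', pkCN', pkCN, pkA', pkB', pkC', pkC]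
    linear_combination ((-1 : ℝ) * (pkc)^3 * (Real.tanh (Wf p)) * ((Real.cosh (Wf p))⁻¹) * (Real.cos (Wf p))^2 + (-1 : ℝ) * (pkc)^3 * (Real.tanh (Wf p)) * ((Real.cosh (Wf p))⁻¹) * (Real.sin (Wf p))^2) * hR1 + ((-2 : ℝ) * (pkc)^3 * (Real.tanh (Wf p)) * ((Real.cosh (Wf p))⁻¹) + (pkc)^3 * (Real.tanh (Wf p)) * ((Real.cosh (Wf p))⁻¹)^3) * hR2 + ((pkc) * (Real.tanh (Wf p)) * ((Real.cosh (Wf p))⁻¹) + (-1 : ℝ) * (pkc)^3 * (Real.tanh (Wf p)) * ((Real.cosh (Wf p))⁻¹)^3) * hR3 + ((-2 : ℝ) * (pkc) * (Real.tanh (Wf p)) * ((Real.cosh (Wf p))⁻¹)) * hR4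
  -- f > 0
  · intro p hp
    have hp' : 0 < p.1 + p.2 := hp
    have hw : 0 < Wf p := mul_pos pkc_pos hp'
    have hT : 0 < Real.tanh (Wf p) := by
      rw [Real.tanh_eq_sinh_div_cosh]
      exact div_pos (Real.sinh_pos_iff.mpr hw) (Real.cosh_pos _)
    have hS : 0 < (Real.cosh (Wf p))⁻¹ := by positivity
    obtain ⟨_, hY⟩ := pk_psi_pd p
    obtain ⟨hXN, _⟩ := pk_N_pd p
    have hf : ⟪pdx pkN p, pdy pkPsi p⟫
        = -(2 * pkc * ((Real.cosh (Wf p))⁻¹ * Real.tanh (Wf p))) := by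
      rw [hXN, hY, pk_inner_mk]
      have hR1 := pk_R1 (Wf p)
      have hR2 := Real.sin_sq_add_cos_sq (Wf p)
      have hR3 := Real.sin_sq_add_cos_sq (Tf p)
      have hR4 := pk_R4
      simp only [pkAN', pkBN', pkCN', pkCN, pkA', pkB', pkC', pkC]
      linear_combination ((-1 : ℝ) * (pkc)^3 * (Real.tanh (Wf p)) * ((Real.cosh (Wf p))⁻¹) * (Real.cos (Wf p))^2 + (-1 : ℝ) * (pkc)^3 * (Real.tanh (Wf p)) * ((Real.cosh (Wf p))⁻¹) * (Real.sin (Wf p))^2) * hR1 + ((-2 : ℝ) * (pkc)^3 * (Real.tanh (Wf p)) * ((Real.cosh (Wf p))⁻¹) + (pkc)^3 * (Real.tanh (Wf p)) * ((Real.cosh (Wf p))⁻¹)^3) * hR2 + ((-1 : ℝ) * (pkc) * (Real.tanh (Wf p)) * ((Real.cosh (Wf p))⁻¹) + (-1 : ℝ) * (pkc)^3 * (Real.tanh (Wf p)) * ((Real.cosh (Wf p))⁻¹)^3) * hR3 + ((-2 : ℝ) * (pkc) * (Real.tanh (Wf p)) * ((Real.cosh (Wf p))⁻¹)) * hR4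
    rw [hf, neg_neg]
    have := pkc_pos
    positivity
  -- K = -2
  · intro p hp
    have hp' : 0 < p.1 + p.2 := hp
    have hw : 0 < Wf p := mul_pos pkc_pos hp'
    have hT : 0 < Real.tanh (Wf p) := by
      rw [Real.tanh_eq_sinh_div_cosh]
      exact div_pos (Real.sinh_pos_iff.mpr hw) (Real.cosh_pos _)
    have hS : 0 < (Real.cosh (Wf p))⁻¹ := by positivity
    obtain ⟨hX, hY⟩ := pk_psi_pd p
    obtain ⟨hXN, _⟩ := pk_N_pd p
    have hR1 := pk_R1 (Wf p)
    have hR2 := Real.sin_sq_add_cos_sq (Wf p)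
    have hR3 := Real.sin_sq_add_cos_sq (Tf p)
    have hR4 := pk_R4
    have hf : ⟪pdx pkN p, pdy pkPsi p⟫
        = -(2 * pkc * ((Real.cosh (Wf p))⁻¹ * Real.tanh (Wf p))) := by
      rw [hXN, hY, pk_inner_mk]
      simp only [pkAN', pkBN', pkCN', pkCN, pkA', pkB', pkC', pkC]
      linear_combination ((-1 : ℝ) * (pkc)^3 * (Real.tanh (Wf p)) * ((Real.cosh (Wf p))⁻¹) * (Real.cos (Wf p))^2 + (-1 : ℝ) * (pkc)^3 * (Real.tanh (Wf p)) * ((Real.cosh (Wf p))⁻¹) * (Real.sin (Wf p))^2) * hR1 + ((-2 : ℝ) * (pkc)^3 * (Real.tanh (Wf p)) * ((Real.cosh (Wf p))⁻¹) + (pkc)^3 * (Real.tanh (Wf p)) * ((Real.cosh (Wf p))⁻¹)^3) * hR2 + ((-1 : ℝ) * (pkc) * (Real.tanh (Wf p)) * ((Real.cosh (Wf p))⁻¹) + (-1 : ℝ) * (pkc)^3 * (Real.tanh (Wf p)) * ((Real.cosh (Wf p))⁻¹)^3) * hR3 + ((-2 : ℝ) * (pkc) * (Real.tanh (Wf p))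 * ((Real.cosh (Wf p))⁻¹)) * hR4
    have hE : ⟪pdx pkPsi p, pdx pkPsi p⟫ = 1/2 := by
      rw [hX, pk_inner_mk]
      simp only [pkA', pkB', pkC', pkC]
      linear_combination ((2 : ℝ) * (pkc)^4 * (Real.cos (Wf p))^2 + (2 : ℝ) * (pkc)^4 * (Real.sin (Wf p))^2 + (pkc)^4 * ((Real.cosh (Wf p))⁻¹)^2 * (Real.cos (Tf p))^2 + (pkc)^4 * ((Real.cosh (Wf p))⁻¹)^2 * (Real.sin (Tf p))^2 + (-1 : ℝ) * (pkc)^4 * ((Real.cosh (Wf p))⁻¹)^2 * (Real.cos (Wf p))^2 + (-1 : ℝ) * (pkc)^4 * ((Real.cosh (Wf p))⁻¹)^2 * (Real.sin (Wf p))^2 + (pkc)^4 * (Real.tanh (Wf p))^2 * (Real.cos (Wf p))^2 + (pkc)^4 * (Real.tanh (Wf p))^2 * (Real.sin (Wf p))^2) * hR1 + ((2 : ℝ) * (pkc)^4 + (-3 : ℝ) * (pkc)^4 * ((Real.cosh (Wf p))⁻¹)^2 + (pkc)^4 * ((Real.cosh (Wf p))⁻¹)^4) * hR2 + ((pkc)^2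 * ((Real.cosh (Wf p))⁻¹)^2 + (pkc)^4 * ((Real.cosh (Wf p))⁻¹)^2 + (-1 : ℝ) * (pkc)^4 * ((Real.cosh (Wf p))⁻¹)^4) * hR3 + ((1 : ℝ) + (2 : ℝ) * (pkc)^2 + (-2 : ℝ) * (pkc)^2 * ((Real.cosh (Wf p))⁻¹)^2) * hR4
    have hG2 : ⟪pdy pkPsi p, pdy pkPsi p⟫ = 1/2 := by
      rw [hY, pk_inner_mk]
      simp only [pkA', pkB', pkC', pkC]
      linear_combination ((2 : ℝ) * (pkc)^4 * (Real.cos (Wf p))^2 + (2 : ℝ) * (pkc)^4 * (Real.sin (Wf p))^2 + (pkc)^4 * ((Real.cosh (Wf p))⁻¹)^2 * (Real.cos (Tf p))^2 + (pkc)^4 * ((Real.cosh (Wf p))⁻¹)^2 * (Real.sin (Tf p))^2 + (-1 : ℝ) * (pkc)^4 * ((Real.cosh (Wf p))⁻¹)^2 * (Real.cos (Wf p))^2 + (-1 : ℝ) * (pkc)^4 * ((Real.cosh (Wf p))⁻¹)^2 * (Real.sin (Wf p))^2 + (pkc)^4 * (Real.tanh (Wf p))^2 * (Real.cos (Wf p))^2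 + (pkc)^4 * (Real.tanh (Wf p))^2 * (Real.sin (Wf p))^2) * hR1 + ((2 : ℝ) * (pkc)^4 + (-3 : ℝ) * (pkc)^4 * ((Real.cosh (Wf p))⁻¹)^2 + (pkc)^4 * ((Real.cosh (Wf p))⁻¹)^4) * hR2 + ((pkc)^2 * ((Real.cosh (Wf p))⁻¹)^2 + (pkc)^4 * ((Real.cosh (Wf p))⁻¹)^2 + (-1 : ℝ) * (pkc)^4 * ((Real.cosh (Wf p))⁻¹)^4) * hR3 + ((1 : ℝ) + (2 : ℝ) * (pkc)^2 + (-2 : ℝ) * (pkc)^2 * ((Real.cosh (Wf p))⁻¹)^2) * hR4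
    have hF1 : ⟪pdx pkPsi p, pdy pkPsi p⟫
        = (Real.tanh (Wf p)^2 - ((Real.cosh (Wf p))⁻¹)^2)/2 := by
      rw [hX, hY, pk_inner_mk]
      simp only [pkA', pkB', pkC', pkC]
      linear_combination ((-1/2 : ℝ) + (2 : ℝ) * (pkc)^4 * (Real.cos (Wf p))^2 + (2 : ℝ) * (pkc)^4 * (Real.sin (Wf p))^2 + (pkc)^4 * ((Real.cosh (Wf p))⁻¹)^2 * (Real.cos (Tf p))^2 + (pkc)^4 * ((Real.cosh (Wf p))⁻¹)^2 * (Real.sin (Tf p))^2 + (-1 : ℝ) * (pkc)^4 * ((Real.cosh (Wf p))⁻¹)^2 * (Real.cos (Wf p))^2 + (-1 : ℝ) * (pkc)^4 * ((Real.cosh (Wf p))⁻¹)^2 * (Real.sin (Wf p))^2 + (pkc)^4 * (Real.tanh (Wf p))^2 * (Real.cos (Wf p))^2 + (pkc)^4 * (Real.tanh (Wf p))^2 * (Real.sin (Wf p))^2) * hR1 + ((2 : ℝ) * (pkc)^4 + (-3 : ℝ) * (pkc)^4 * ((Real.cosh (Wf p))⁻¹)^2 + (pkc)^4 * ((Real.cosh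 (Wf p))⁻¹)^4) * hR2 + ((-1 : ℝ) * (pkc)^2 * ((Real.cosh (Wf p))⁻¹)^2 + (pkc)^4 * ((Real.cosh (Wf p))⁻¹)^2 + (-1 : ℝ) * (pkc)^4 * ((Real.cosh (Wf p))⁻¹)^4) * hR3 + ((1 : ℝ) + (-2 : ℝ) * ((Real.cosh (Wf p))⁻¹)^2 + (2 : ℝ) * (pkc)^2 + (-2 : ℝ) * (pkc)^2 * ((Real.cosh (Wf p))⁻¹)^2) * hR4
    rw [hf, hE, hG2, hF1]
    have hden : (1:ℝ)/2 * (1/2) - ((Real.tanh (Wf p)^2 - ((Real.cosh (Wf p))⁻¹)^2)/2)^2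
        = (Real.tanh (Wf p) * (Real.cosh (Wf p))⁻¹)^2 := by
      linear_combination ((-1/4 : ℝ) + (-1/4 : ℝ) * ((Real.cosh (Wf p))⁻¹)^2 + (-1/4 : ℝ) * (Real.tanh (Wf p))^2) * hR1
    rw [hden, div_eq_iff (pow_ne_zero _ (mul_ne_zero hT.ne' hS.ne'))]
    linear_combination ((-4 : ℝ) * (Real.tanh (Wf p))^2 * ((Real.cosh (Wf p))⁻¹)^2) * hR4
end
end
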